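/- arXiv:1801.06216 — 6 statements merged into one kernel-verified Lean document; each statement's English description precedes it below -/
import Mathlib

section
/- Every finite simple graph G with minimum degree at least 1 and at least 4 vertices that is not a star has a (δ≥1, δ≥1)-partition. -/
/-- A `(δ ≥ k₁, δ ≥ k₂)`-partition of a graph `G`: a partition of the vertex set into
two disjoint nonempty sets `V₁, V₂` covering all vertices such that the induced subgraph
`G[Vᵢ]` has minimum degree at least `kᵢ` for `i = 1, 2`. -/
def HasMinDegPartition {V : Type*} (G : SimpleGraph V) (k1 k2 : ℕ) : Prop :=
  ∃ V1 V2 : Set V, V1.Nonempty ∧ V2.Nonempty ∧ Disjoint V1 V2 ∧ V1 ∪ V2 = Set.univ ∧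
    (∀ v ∈ V1, k1 ≤ (V1 ∩ G.neighborSet v).ncard) ∧
    (∀ v ∈ V2, k2 ≤ (V2 ∩ G.neighborSet v).ncard)

/-- `G` is a star: some center vertex is adjacent to all other vertices and
there are no other edges. -/
def IsStar {V : Type*} (G : SimpleGraph V) : Prop :=
  ∃ c : V, (∀ v : V, v ≠ c → G.Adj c v) ∧ ∀ u v : V, G.Adj u v → u = c ∨ v = c

/-!
Since `G` has no isolated vertex and is not a star, it has two disjoint edges `ab` and `cd`.
Grow a set `A ⊇ {a, b}` avoiding `c, d` and inducing no isolated vertex, as large as possible.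
Then the complement induces no isolated vertex either: `c` and `d` are adjacent, and any other
vertex outside `A` with all its neighbours in `A` could be added to `A`.
-/

namespace SimpleGraph

variable {V : Type*} (G : SimpleGraph V)

def NoIsolatedOn (s : Set V) : Prop :=
  ∀ v ∈ s, ∃ w ∈ s, G.Adj v w

variable {G}

theorem noIsolatedOn_pair {a b : V} (h : G.Adj a b) : G.NoIsolatedOn {a, b} := by
  rintro v (rfl | rfl)
  · exact ⟨b, by simp, h⟩
  · exact ⟨a, by simp, h.symm⟩

theorem NoIsolatedOn.insert {s : Set V} {v : V} (hs : G.NoIsolatedOn s)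
    (hv : ∃ w ∈ s, G.Adj v w) : G.NoIsolatedOn (insert v s) := by
  rintro u (rfl | hu)
  · obtain ⟨w, hw, hvw⟩ := hv
    exact ⟨w, Set.mem_insert_of_mem _ hw, hvw⟩
  · obtain ⟨w, hw, huw⟩ := hs u hu
    exact ⟨w, Set.mem_insert_of_mem _ hw, huw⟩

theorem one_le_ncard_inter_neighborSet_iff [Finite V] {s : Set V} {v : V} :
    1 ≤ (s ∩ G.neighborSet v).ncard ↔ ∃ w ∈ s, G.Adj v w := by
  rw [Nat.one_le_iff_ne_zero, ← Nat.pos_iff_ne_zero, Set.ncard_pos]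
  rfl

theorem hasMinDegPartition_one_one_of_noIsolatedOn [Finite V] {A : Set V}
    (hA : A.Nonempty) (hAc : Aᶜ.Nonempty) (hGA : G.NoIsolatedOn A)
    (hGAc : G.NoIsolatedOn Aᶜ) : HasMinDegPartition G 1 1 :=
  ⟨A, Aᶜ, hA, hAc, disjoint_compl_right, Set.union_compl_self A,
    fun v hv => one_le_ncard_inter_neighborSet_iff.2 (hGA v hv),
    fun v hv => one_le_ncard_inter_neighborSet_iff.2 (hGAc v hv)⟩

theorem exists_noIsolatedOn_compl [Finite V] (hG : ∀ v, ∃ w, G.Adj v w) {S T : Set V}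
    (hS : G.NoIsolatedOn S) (hT : G.NoIsolatedOn T) (hST : Disjoint S T) :
    ∃ A, S ⊆ A ∧ T ⊆ Aᶜ ∧ G.NoIsolatedOn A ∧ G.NoIsolatedOn Aᶜ := by
  obtain ⟨A, -, hmax⟩ := Finite.exists_le_maximal
    (p := fun A : Set V => S ⊆ A ∧ T ⊆ Aᶜ ∧ G.NoIsolatedOn A)
    (a := S) ⟨subset_rfl, hST.subset_compl_left, hS⟩
  obtain ⟨hSA, hTA, hA⟩ := hmax.prop
  refine ⟨A, hSA, hTA, hA, fun v hv => ?_⟩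
  by_cases hvT : v ∈ T
  · obtain ⟨w, hw, hvw⟩ := hT v hvT
    exact ⟨w, hTA hw, hvw⟩
  by_contra! hno
  have hnbr : ∃ w ∈ A, G.Adj v w := by
    obtain ⟨w, hvw⟩ := hG v
    exact ⟨w, by_contra fun hw => hno w hw hvw, hvw⟩
  have hins : S ⊆ insert v A ∧ T ⊆ (insert v A)ᶜ ∧ G.NoIsolatedOn (insert v A) :=
    ⟨hSA.trans (Set.subset_insert v A),
      fun t ht => by simpa [ne_of_mem_of_not_mem ht hvT] using hTA ht,
      hA.insert hnbr⟩
  exact hv (hmax.2 hins (Set.subset_insert v A) (Set.mem_insert v A))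

theorem exists_adj_ne_ne_of_not_isStar (hG : ∀ v, ∃ w, G.Adj v w) (hstar : ¬ IsStar G)
    (x : V) : ∃ u v, G.Adj u v ∧ u ≠ x ∧ v ≠ x := by
  by_contra! h
  refine hstar ⟨x, fun v hv => ?_, fun u v huv => or_iff_not_imp_left.2 (h u v huv)⟩
  obtain ⟨w, hvw⟩ := hG v
  exact h v w hvw hv ▸ hvw.symm

theorem exists_disjoint_adj [Fintype V] (hcard : 4 ≤ Fintype.card V)
    (hG : ∀ v, ∃ w, G.Adj v w) (hstar : ¬ IsStar G) :
    ∃ a b c d, G.Adj a b ∧ G.Adj c d ∧ a ≠ c ∧ a ≠ d ∧ b ≠ c ∧ b ≠ d := by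
  classical
  by_contra! hdisj
  have hmeet : ∀ a b c d, G.Adj a b → G.Adj c d → a = c ∨ a = d ∨ b = c ∨ b = d := by
    intro a b c d hab hcd
    have := hdisj a b c d hab hcd
    tauto
  -- In an intersecting edge set, the edge avoiding `a` given by non-starness passes through `b`.
  have hnbr : ∀ a b, G.Adj a b → ∃ x, x ≠ a ∧ G.Adj b x := by
    intro a b hab
    obtain ⟨u, v, huv, hua, hva⟩ := exists_adj_ne_ne_of_not_isStar hG hstar a
    rcases hmeet a b u v hab huv with h | h | h | h
    · exact absurd h.symm hua
    · exact absurd h.symm hva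
    · exact ⟨v, hva, h ▸ huv⟩
    · exact ⟨u, hua, h ▸ huv.symm⟩
  obtain ⟨a⟩ : Nonempty V := Fintype.card_pos_iff.mp (by omega)
  obtain ⟨b, hab⟩ := hG a
  obtain ⟨x, hxa, hbx⟩ := hnbr a b hab
  obtain ⟨y, hyb, hay⟩ := hnbr b a hab.symm
  obtain rfl : y = x := by
    rcases hmeet a y b x hay hbx with h | h | h | h
    · exact absurd h hab.ne
    · exact absurd h.symm hxa
    · exact absurd h hyb
    · exact h
  obtain ⟨w, -, hw⟩ := Finset.exists_mem_notMem_of_card_lt_card (s := {a, b, y})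
    (t := Finset.univ) (Finset.card_le_three.trans_lt (by rw [Finset.card_univ]; omega))
  -- An edge at the fourth vertex `w` misses a side of the triangle `aby`.
  obtain ⟨z, hwz⟩ := hG w
  grind [hmeet a b w z hab hwz, hmeet b y w z hbx hwz, hmeet a y w z hay hwz,
    hab.ne, hbx.ne, hay.ne]

end SimpleGraph

open SimpleGraph in
/-- Every finite graph with minimum degree at least 1 and at least 4 vertices which is
not a star has a `(δ ≥ 1, δ ≥ 1)`-partition. -/
theorem one_one_partition {V : Type*} [Fintype V] (G : SimpleGraph V)
    (hcard : 4 ≤ Fintype.card V)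
    (hdeg : ∀ v : V, 1 ≤ (G.neighborSet v).ncard)
    (hstar : ¬ IsStar G) :
    HasMinDegPartition G 1 1 := by
  have hG : ∀ v, ∃ w, G.Adj v w := fun v =>
    Set.nonempty_of_ncard_ne_zero (Nat.one_le_iff_ne_zero.1 (hdeg v))
  obtain ⟨a, b, c, d, hab, hcd, hac, had, hbc, hbd⟩ := exists_disjoint_adj hcard hG hstar
  have hdisj : Disjoint ({a, b} : Set V) {c, d} := by
    simp [hac.symm, had.symm, hbc.symm, hbd.symm]
  obtain ⟨A, hSA, hTA, hA, hAc⟩ :=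
    exists_noIsolatedOn_compl hG (noIsolatedOn_pair hab) (noIsolatedOn_pair hcd) hdisj
  exact hasMinDegPartition_one_one_of_noIsolatedOn ⟨a, hSA (by simp)⟩ ⟨c, hTA (by simp)⟩ hA hAc
end

section
/- A finite simple graph G with minimum degree at least 3 has a (δ≥2, δ≥2)-partition if and only if G contains two vertex-disjoint cycles. -/
namespace TwoTwoAux

variable {V : Type*} {G : SimpleGraph V}

/-- In a path starting at `b`, any edge containing `b` is the first edge. -/
lemma edge_start_eq_getVert_one {b a x : V} {q : G.Walk b a} (hq : q.IsPath)
    (h : s(x, b) ∈ q.edges) : x = q.getVert 1 := by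
  cases q with
  | nil => simp at h
  | @cons _ c _ h' q'' =>
    rw [SimpleGraph.Walk.cons_isPath_iff] at hq
    simp only [SimpleGraph.Walk.edges_cons, List.mem_cons] at h
    rcases h with h | h
    · rw [Sym2.eq_iff] at h
      rcases h with ⟨rfl, rfl⟩ | ⟨rfl, -⟩
      · exact absurd rfl h'.ne
      · simp [SimpleGraph.Walk.getVert_cons_succ, SimpleGraph.Walk.getVert_zero]
    · exact absurd (SimpleGraph.Walk.snd_mem_support_of_mem_edges _ h) hq.2

/-- Every vertex on a cycle has two distinct neighbors on the cycle. -/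
lemma cycle_two_neighbors {u : V} {c : G.Walk u u} (hc : c.IsCycle)
    {w : V} (hw : w ∈ c.support) :
    ∃ a b, a ≠ b ∧ a ∈ c.support ∧ b ∈ c.support ∧ G.Adj w a ∧ G.Adj w b := by
  classical
  set d := c.rotate w hw with hd
  have hdc : d.IsCycle := hc.rotate hw
  have hmem : ∀ x, x ∈ d.support → x ∈ c.support := by
    intro x hx
    rw [SimpleGraph.Walk.support_eq_cons d] at hx
    rcases List.mem_cons.mp hx with rfl | hx
    · exact hw
    · exact List.mem_of_mem_tail
        (((SimpleGraph.Walk.support_rotate c w hw).perm.mem_iff).mp hx)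
  have hnn : ¬ d.Nil := hdc.not_nil
  have hlen : 3 ≤ d.length := hdc.three_le_length
  have hcons := d.cons_tail_eq hnn
  have hct : d.tail.IsPath ∧ s(w, d.getVert 1) ∉ d.tail.edges := by
    rw [← SimpleGraph.Walk.cons_isCycle_iff]
    rw [hcons]
    exact hdc
    exact d.adj_snd hnn
  have htlen : d.tail.length + 1 = d.length := SimpleGraph.Walk.length_tail_add_one hnn
  have htnn : ¬ d.tail.Nil := by
    rw [SimpleGraph.Walk.nil_iff_length_eq]
    omega
  have hrnn : ¬ d.tail.reverse.Nil := by
    rw [SimpleGraph.Walk.nil_iff_length_eq, SimpleGraph.Walk.length_reverse]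
    rw [SimpleGraph.Walk.nil_iff_length_eq] at htnn
    exact htnn
  have hadj_a : G.Adj w (d.getVert 1) := d.adj_snd hnn
  have hadj_b : G.Adj w (d.tail.reverse.getVert 1) := d.tail.reverse.adj_snd hrnn
  have hta : d.tail.support ⊆ d.support := by
    intro x hx
    rw [← hcons]
    simp only [SimpleGraph.Walk.support_cons, List.mem_cons]
    right; exact hx
  have haind : d.getVert 1 ∈ d.support := by
    rw [SimpleGraph.Walk.mem_support_iff_exists_getVert]
    exact ⟨1, rfl, by omega⟩
  have hbint : d.tail.reverse.getVert 1 ∈ d.tail.support := by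
    have : d.tail.reverse.getVert 1 ∈ d.tail.reverse.support := by
      rw [SimpleGraph.Walk.mem_support_iff_exists_getVert]
      exact ⟨1, rfl, by rw [SimpleGraph.Walk.length_reverse]; omega⟩
    rwa [SimpleGraph.Walk.support_reverse, List.mem_reverse] at this
  have hne : d.getVert 1 ≠ d.tail.reverse.getVert 1 := by
    intro hab
    have hfe : s(w, d.tail.reverse.getVert 1) ∈ d.tail.reverse.edges := by
      rw [← d.tail.reverse.cons_tail_eq hrnn]
      simp [SimpleGraph.Walk.edges_cons]
    rw [SimpleGraph.Walk.edges_reverse, List.mem_reverse] at hfe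
    rw [← hab] at hfe
    exact hct.2 hfe
  exact ⟨_, _, hne, hmem _ haind, hmem _ (hta hbint), hadj_a, hadj_b⟩

/-- A nonempty finite graph with minimum degree at least 2 contains a cycle. -/
lemma exists_cycle_of_two_le {W : Type*} [Fintype W] [Nonempty W] (H : SimpleGraph W)
    (h2 : ∀ x : W, 2 ≤ (H.neighborSet x).ncard) :
    ∃ (x : W) (c : H.Walk x x), c.IsCycle := by
  classical
  have hne : Nonempty (Σ a : W, Σ b : W, H.Path a b) :=
    ⟨⟨Classical.arbitrary W, Classical.arbitrary W, SimpleGraph.Path.nil⟩⟩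
  obtain ⟨⟨a, b, p⟩, hmax⟩ := Finite.exists_max
    (fun s : Σ a : W, Σ b : W, H.Path a b => (s.2.2 : H.Walk s.1 s.2.1).length)
  have hp : (p : H.Walk a b).IsPath := p.2
  set q := (p : H.Walk a b).reverse with hq
  have hqp : q.IsPath := hp.reverse
  have hnb : ∀ x, H.Adj b x → x ∈ q.support := by
    intro x hx
    by_contra hxs
    have hpath : (SimpleGraph.Walk.cons hx.symm q).IsPath :=
      (SimpleGraph.Walk.cons_isPath_iff _ _).mpr ⟨hqp, hxs⟩
    have := hmax ⟨x, a, ⟨_, hpath⟩⟩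
    simp only [SimpleGraph.Walk.length_cons, hq, SimpleGraph.Walk.length_reverse] at this
    omega
  obtain ⟨x, y, hxm, hym, hxy⟩ := (Set.one_lt_ncard_iff (H.neighborSet b).toFinite).mp
    (lt_of_lt_of_le one_lt_two (h2 b))
  have hbx : H.Adj b x := hxm
  have hby : H.Adj b y := hym
  have key : ∀ z, ∀ hz : H.Adj b z, s(z, b) ∈ (q.takeUntil z (hnb z hz)).edges →
      z = q.getVert 1 := by
    intro z hz hze
    exact edge_start_eq_getVert_one hqp (SimpleGraph.Walk.edges_takeUntil_subset _ _ hze)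
  have : ∃ z, ∃ hz : H.Adj b z, s(z, b) ∉ (q.takeUntil z (hnb z hz)).edges := by
    by_contra hcon
    push_neg at hcon
    have hx1 := key x hbx (hcon x hbx)
    have hy1 := key y hby (hcon y hby)
    exact hxy (hx1.trans hy1.symm)
  obtain ⟨z, hz, hzgood⟩ := this
  refine ⟨z, SimpleGraph.Walk.cons hz.symm (q.takeUntil z (hnb z hz)), ?_⟩
  rw [SimpleGraph.Walk.cons_isCycle_iff]
  exact ⟨hqp.takeUntil _, hzgood⟩

lemma exists_cycle_in_set [Fintype V] {S : Set V} (hne : S.Nonempty)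
    (h2 : ∀ v ∈ S, 2 ≤ (S ∩ G.neighborSet v).ncard) :
    ∃ (x : V) (c : G.Walk x x), c.IsCycle ∧ ∀ w ∈ c.support, w ∈ S := by
  classical
  have : Nonempty S := hne.to_subtype
  have hS : ∀ x : S, 2 ≤ ((G.induce S).neighborSet x).ncard := by
    intro x
    have himg : Subtype.val '' ((G.induce S).neighborSet x) = S ∩ G.neighborSet ↑x := by
      ext y
      constructor
      · rintro ⟨y', hy', rfl⟩
        exact ⟨y'.2, hy'⟩
      · rintro ⟨hyS, hyadj⟩
        exact ⟨⟨y, hyS⟩, hyadj, rfl⟩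
    have := h2 ↑x x.2
    rwa [← himg, Set.ncard_image_of_injective _ Subtype.val_injective] at this
  obtain ⟨x, c, hc⟩ := exists_cycle_of_two_le (G.induce S) hS
  refine ⟨↑x, c.map (SimpleGraph.Embedding.induce S).toHom, ?_, ?_⟩
  · exact hc.map (SimpleGraph.Embedding.induce S (G := G)).injective
  · intro w hw
    replace hw : w ∈ (c.map (SimpleGraph.Embedding.induce S).toHom).support := hw
    rw [SimpleGraph.Walk.support_map, List.mem_map] at hw
    obtain ⟨w', _, rfl⟩ := hw
    exact w'.2

variable [Fintype V] [DecidableEq V] (G) [DecidableRel G.Adj]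

/-- The weight counting, for each vertex, its neighbors on its own side of the cut `(T, Tᶜ)`. -/
def wt (T : Finset V) : ℕ :=
  ∑ x, if x ∈ T then (G.neighborFinset x ∩ T).card else (G.neighborFinset x ∩ Tᶜ).card

lemma wt_erase (T : Finset V) {v : V} (hv : v ∈ T) :
    wt G (T.erase v) + 2 * (G.neighborFinset v ∩ T).card
      = wt G T + 2 * (G.neighborFinset v ∩ Tᶜ).card := by
  classical
  have hvv : v ∉ G.neighborFinset v := by simp
  have hcompl : (T.erase v)ᶜ = insert v Tᶜ := by
    ext y
    simp only [Finset.mem_compl, Finset.mem_erase, Finset.mem_insert]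
    tauto
  have hvterm : (G.neighborFinset v ∩ insert v Tᶜ) = G.neighborFinset v ∩ Tᶜ := by
    ext y
    simp only [Finset.mem_inter, Finset.mem_insert]
    constructor
    · rintro ⟨hy, rfl | hy2⟩
      · exact absurd hy hvv
      · exact ⟨hy, hy2⟩
    · rintro ⟨hy, hy2⟩; exact ⟨hy, Or.inr hy2⟩
  have h1 : (G.neighborFinset v ∩ T).card
      = ∑ x ∈ Finset.univ.erase v, (if x ∈ T ∧ x ∈ G.neighborFinset v then 1 else 0) := by
    rw [← Finset.card_filter]
    congr 1
    ext x
    have hne : x ∈ G.neighborFinset v → x ≠ v := fun h =>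
      (G.ne_of_adj (by rwa [SimpleGraph.mem_neighborFinset] at h)).symm
    simp only [Finset.mem_inter, Finset.mem_filter, Finset.mem_erase, Finset.mem_univ,
      true_and, and_true]
    tauto
  have h2 : (G.neighborFinset v ∩ Tᶜ).card
      = ∑ x ∈ Finset.univ.erase v, (if x ∉ T ∧ x ∈ G.neighborFinset v then 1 else 0) := by
    rw [← Finset.card_filter]
    congr 1
    ext x
    have hne : x ∈ G.neighborFinset v → x ≠ v := fun h =>
      (G.ne_of_adj (by rwa [SimpleGraph.mem_neighborFinset] at h)).symm
    simp only [Finset.mem_inter, Finset.mem_filter, Finset.mem_erase, Finset.mem_univ,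
      Finset.mem_compl, true_and, and_true]
    tauto
  have hsplit : ∀ T' : Finset V, wt G T'
      = (if v ∈ T' then (G.neighborFinset v ∩ T').card else (G.neighborFinset v ∩ T'ᶜ).card)
        + ∑ x ∈ Finset.univ.erase v,
            (if x ∈ T' then (G.neighborFinset x ∩ T').card
             else (G.neighborFinset x ∩ T'ᶜ).card) := by
    intro T'
    rw [wt, ← Finset.add_sum_erase _ _ (Finset.mem_univ v)]
  have hkey : ∑ x ∈ Finset.univ.erase v,
        ((if x ∈ T.erase v then (G.neighborFinset x ∩ T.erase v).card
          else (G.neighborFinset x ∩ (T.erase v)ᶜ).card)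
         + (if x ∈ T ∧ x ∈ G.neighborFinset v then 1 else 0))
      = ∑ x ∈ Finset.univ.erase v,
        ((if x ∈ T then (G.neighborFinset x ∩ T).card else (G.neighborFinset x ∩ Tᶜ).card)
         + (if x ∉ T ∧ x ∈ G.neighborFinset v then 1 else 0)) := by
    apply Finset.sum_congr rfl
    intro x hx
    have hxv : x ≠ v := (Finset.mem_erase.mp hx).1
    have hmemsym : x ∈ G.neighborFinset v ↔ v ∈ G.neighborFinset x := by
      simp only [SimpleGraph.mem_neighborFinset]
      exact ⟨fun h => h.symm, fun h => h.symm⟩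
    by_cases hxT : x ∈ T
    · have hxT' : x ∈ T.erase v := Finset.mem_erase.mpr ⟨hxv, hxT⟩
      rw [if_pos hxT, if_pos hxT']
      have hie : G.neighborFinset x ∩ T.erase v = (G.neighborFinset x ∩ T).erase v := by
        ext y; simp only [Finset.mem_inter, Finset.mem_erase]; tauto
      rw [hie]
      by_cases hvn : v ∈ G.neighborFinset x
      · rw [if_pos ⟨hxT, hmemsym.mpr hvn⟩, if_neg (by tauto)]
        have := Finset.card_erase_add_one (Finset.mem_inter.mpr ⟨hvn, hv⟩)
        omega
      · rw [Finset.erase_eq_of_notMem (fun hc => hvn (Finset.mem_inter.mp hc).1)]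
        rw [if_neg (by tauto), if_neg (by tauto)]
    · have hxT' : x ∉ T.erase v := fun hc => hxT (Finset.mem_erase.mp hc).2
      rw [if_neg hxT, if_neg hxT', hcompl]
      by_cases hvn : v ∈ G.neighborFinset x
      · have hins : G.neighborFinset x ∩ insert v Tᶜ
            = insert v (G.neighborFinset x ∩ Tᶜ) := by
          ext y
          simp only [Finset.mem_inter, Finset.mem_insert]
          constructor
          · rintro ⟨hy, rfl | hy2⟩
            · exact Or.inl rfl
            · exact Or.inr ⟨hy, hy2⟩
          · rintro (rfl | ⟨hy, hy2⟩)
            · exact ⟨hvn, Or.inl rfl⟩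
            · exact ⟨hy, Or.inr hy2⟩
        rw [hins, Finset.card_insert_of_notMem (fun hc => (Finset.mem_compl.mp
          (Finset.mem_inter.mp hc).2) hv)]
        rw [if_neg (by tauto), if_pos ⟨hxT, hmemsym.mpr hvn⟩]
      · have hins : G.neighborFinset x ∩ insert v Tᶜ = G.neighborFinset x ∩ Tᶜ := by
          ext y
          simp only [Finset.mem_inter, Finset.mem_insert]
          constructor
          · rintro ⟨hy, rfl | hy2⟩
            · exact absurd hy hvn
            · exact ⟨hy, hy2⟩
          · rintro ⟨hy, hy2⟩; exact ⟨hy, Or.inr hy2⟩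
        rw [hins, if_neg (by tauto), if_neg (by tauto)]
  rw [Finset.sum_add_distrib, Finset.sum_add_distrib, hcompl] at hkey
  have e1 := hsplit (T.erase v)
  have e2 := hsplit T
  rw [if_neg (Finset.notMem_erase v T), hcompl, hvterm] at e1
  rw [if_pos hv] at e2
  omega

lemma wt_insert (T : Finset V) {v : V} (hv : v ∉ T) :
    wt G T + 2 * (G.neighborFinset v ∩ T).card
      = wt G (insert v T) + 2 * (G.neighborFinset v ∩ Tᶜ).card := by
  classical
  have hvv : v ∉ G.neighborFinset v := by simp
  have h := wt_erase G (insert v T) (Finset.mem_insert_self v T)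
  rw [Finset.erase_insert hv] at h
  have h1 : G.neighborFinset v ∩ insert v T = G.neighborFinset v ∩ T := by
    ext y
    simp only [Finset.mem_inter, Finset.mem_insert]
    constructor
    · rintro ⟨hy, rfl | hy2⟩
      · exact absurd hy hvv
      · exact ⟨hy, hy2⟩
    · rintro ⟨hy, hy2⟩; exact ⟨hy, Or.inr hy2⟩
  have h2 : G.neighborFinset v ∩ (insert v T)ᶜ = G.neighborFinset v ∩ Tᶜ := by
    ext y
    simp only [Finset.mem_inter, Finset.mem_compl, Finset.mem_insert]
    constructor
    · rintro ⟨hy, hy2⟩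
      exact ⟨hy, fun hc => hy2 (Or.inr hc)⟩
    · rintro ⟨hy, hy2⟩
      refine ⟨hy, fun hc => ?_⟩
      rcases hc with rfl | hc
      · exact hvv hy
      · exact hy2 hc
  rw [h1, h2] at h
  omega

end TwoTwoAux

open TwoTwoAux


/-- A finite graph of minimum degree at least 3 has a `(δ ≥ 2, δ ≥ 2)`-partition
if and only if it contains two vertex-disjoint cycles. -/
theorem two_two_partition_iff_two_disjoint_cycles {V : Type*} [Fintype V]
    (G : SimpleGraph V) (hdeg : ∀ v : V, 3 ≤ (G.neighborSet v).ncard) :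
    HasMinDegPartition G 2 2 ↔
      ∃ (u v : V) (c1 : G.Walk u u) (c2 : G.Walk v v),
        c1.IsCycle ∧ c2.IsCycle ∧ ∀ w, w ∈ c1.support → w ∉ c2.support := by
  classical
  constructor
  · rintro ⟨V1, V2, h1ne, h2ne, hdisj, -, hd1, hd2⟩
    obtain ⟨u, c1, hc1, hs1⟩ := exists_cycle_in_set h1ne hd1
    obtain ⟨v, c2, hc2, hs2⟩ := exists_cycle_in_set h2ne hd2
    exact ⟨u, v, c1, c2, hc1, hc2, fun w hw1 hw2 =>
      Set.disjoint_left.mp hdisj (hs1 w hw1) (hs2 w hw2)⟩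
  · rintro ⟨u, v, c1, c2, hc1, hc2, hdisj⟩
    set A := c1.support.toFinset with hA
    set B := c2.support.toFinset with hB
    have hAB : Disjoint A B := by
      rw [Finset.disjoint_left]
      intro x hx hx2
      rw [hA, List.mem_toFinset] at hx
      rw [hB, List.mem_toFinset] at hx2
      exact hdisj x hx hx2
    -- degrees as finset cards
    have hdeg' : ∀ x : V, ∀ T : Finset V,
        (G.neighborFinset x ∩ T).card + (G.neighborFinset x ∩ Tᶜ).card = G.degree x := by
      intro x T
      rw [← Finset.sdiff_eq_inter_compl, Finset.card_inter_add_card_sdiff]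
      rfl
    have hdeg3 : ∀ x : V, 3 ≤ G.degree x := by
      intro x
      have h := hdeg x
      have hco : (↑(G.neighborFinset x) : Set V) = G.neighborSet x := by
        ext y; simp
      rwa [← hco, Set.ncard_coe_finset] at h
    -- the candidate family
    set K : Finset (Finset V) :=
      Finset.univ.filter (fun T : Finset V => A ⊆ T ∧ Disjoint T B) with hK
    have hAK : A ∈ K := by
      rw [hK, Finset.mem_filter]
      exact ⟨Finset.mem_univ _, subset_rfl, hAB⟩
    obtain ⟨T, hTK, hTmax⟩ := Finset.exists_max_image K (wt G) ⟨A, hAK⟩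
    rw [hK, Finset.mem_filter] at hTK
    obtain ⟨-, hAT, hTB⟩ := hTK
    have hBT : ∀ x ∈ B, x ∉ T := fun x hx hxT => (Finset.disjoint_right.mp hTB) hx hxT
    -- cycle vertices have 2 neighbors on their side
    have hcycA : ∀ x ∈ A, 2 ≤ (G.neighborFinset x ∩ T).card := by
      intro x hx
      rw [hA, List.mem_toFinset] at hx
      obtain ⟨a, b, hab, ha, hb, hwa, hwb⟩ := cycle_two_neighbors hc1 hx
      have hsub : ({a, b} : Finset V) ⊆ G.neighborFinset x ∩ T := by
        intro y hy
        rcases Finset.mem_insert.mp hy with rfl | hy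
        · exact Finset.mem_inter.mpr ⟨(SimpleGraph.mem_neighborFinset _ _ _).mpr hwa,
            hAT (by rw [hA, List.mem_toFinset]; exact ha)⟩
        · rw [Finset.mem_singleton] at hy; subst hy
          exact Finset.mem_inter.mpr ⟨(SimpleGraph.mem_neighborFinset _ _ _).mpr hwb,
            hAT (by rw [hA, List.mem_toFinset]; exact hb)⟩
      calc 2 = ({a, b} : Finset V).card := (Finset.card_pair hab).symm
        _ ≤ _ := Finset.card_le_card hsub
    have hcycB : ∀ x ∈ B, 2 ≤ (G.neighborFinset x ∩ Tᶜ).card := by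
      intro x hx
      rw [hB, List.mem_toFinset] at hx
      obtain ⟨a, b, hab, ha, hb, hwa, hwb⟩ := cycle_two_neighbors hc2 hx
      have hsub : ({a, b} : Finset V) ⊆ G.neighborFinset x ∩ Tᶜ := by
        intro y hy
        rcases Finset.mem_insert.mp hy with rfl | hy
        · exact Finset.mem_inter.mpr ⟨(SimpleGraph.mem_neighborFinset _ _ _).mpr hwa,
            Finset.mem_compl.mpr (hBT _ (by rw [hB, List.mem_toFinset]; exact ha))⟩
        · rw [Finset.mem_singleton] at hy; subst hy
          exact Finset.mem_inter.mpr ⟨(SimpleGraph.mem_neighborFinset _ _ _).mpr hwb,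
            Finset.mem_compl.mpr (hBT _ (by rw [hB, List.mem_toFinset]; exact hb))⟩
      calc 2 = ({a, b} : Finset V).card := (Finset.card_pair hab).symm
        _ ≤ _ := Finset.card_le_card hsub
    -- minimum degree 2 inside T
    have hdT : ∀ x ∈ T, 2 ≤ (G.neighborFinset x ∩ T).card := by
      intro x hxT
      by_contra hlt
      push_neg at hlt
      have hxA : x ∉ A := fun hxA => absurd (hcycA x hxA) (by omega)
      have hT'K : T.erase x ∈ K := by
        rw [hK, Finset.mem_filter]
        refine ⟨Finset.mem_univ _, ?_, Finset.disjoint_of_subset_left (Finset.erase_subset _ _) hTB⟩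
        intro y hy
        exact Finset.mem_erase.mpr ⟨fun hc => hxA (hc ▸ hy), hAT hy⟩
      have hle := hTmax _ hT'K
      have heq := wt_erase G T hxT
      have hd := hdeg' x T
      have h3 := hdeg3 x
      omega
    have hdTc : ∀ x, x ∉ T → 2 ≤ (G.neighborFinset x ∩ Tᶜ).card := by
      intro x hxT
      by_contra hlt
      push_neg at hlt
      have hxB : x ∉ B := fun hxB => absurd (hcycB x hxB) (by omega)
      have hT'K : insert x T ∈ K := by
        rw [hK, Finset.mem_filter]
        refine ⟨Finset.mem_univ _, fun y hy => Finset.mem_insert_of_mem (hAT hy), ?_⟩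
        rw [Finset.disjoint_left]
        intro y hy hyB
        rcases Finset.mem_insert.mp hy with rfl | hy
        · exact hxB hyB
        · exact (Finset.disjoint_left.mp hTB) hy hyB
      have hle := hTmax _ hT'K
      have heq := wt_insert G T hxT
      have hd := hdeg' x T
      have h3 := hdeg3 x
      omega
    -- assemble the partition
    refine ⟨↑T, ↑(Tᶜ), ⟨u, hAT (by rw [hA, List.mem_toFinset]; exact c1.start_mem_support)⟩,
      ⟨v, Finset.mem_coe.mpr (Finset.mem_compl.mpr
        (hBT v (by rw [hB, List.mem_toFinset]; exact c2.start_mem_support)))⟩,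
      ?_, ?_, ?_, ?_⟩
    · rw [Finset.disjoint_coe]
      exact disjoint_compl_right
    · rw [← Finset.coe_union, Finset.union_compl, Finset.coe_univ]
    · intro x hx
      have : (↑T : Set V) ∩ G.neighborSet x = ↑(T ∩ G.neighborFinset x) := by
        rw [Finset.coe_inter]; congr 1; ext y; simp
      rw [this, Set.ncard_coe_finset, Finset.inter_comm]
      exact hdT x hx
    · intro x hx
      have hxT : x ∉ T := Finset.mem_compl.mp hx
      have : (↑(Tᶜ) : Set V) ∩ G.neighborSet x = ↑(Tᶜ ∩ G.neighborFinset x) := by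
        rw [Finset.coe_inter]; congr 1; ext y; simp
      rw [this, Set.ncard_coe_finset, Finset.inter_comm]
      exact hdTc x hxT
end

section
/- Every finite simple graph G with minimum degree at least 5 that contains a triangle and is not isomorphic to the complete graph K6 has a (δ≥2, δ≥3)-partition. -/
/-!
If there is no disjoint pair `A`, `B` of nonempty sets with `δ(G[A]) ≥ 2` and `δ(G[B]) ≥ 3`,
then every nonempty proper `A` with `δ(G[A]) ≥ 2` has an outside vertex `w` with at most two
neighbours outside `A`. Adding `w` keeps `δ ≥ 2` and, since `deg w ≥ 5`, lowers the number of
edges leaving `A` by at least one. Applied to a triangle this yields a common neighbour of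
degree 5, and three such steps give a triangle of degree-5 vertices, whose cut has at most 9
edges. Growing it greedily until two vertices remain takes `n - 5` steps, while the final cut
has at least 8 edges, so `n ≤ 6` and `G = K₆`. Conversely, a disjoint pair extends to a
partition by taking for `B` the largest set disjoint from `A` with `δ ≥ 3`.
-/

open Finset

namespace SimpleGraph

variable {V : Type*} (G : SimpleGraph V)

def HasMinDegreeOn (A : Set V) (k : ℕ) : Prop :=
  ∀ v ∈ A, k ≤ (A ∩ G.neighborSet v).ncard

def HasDisjointMinDegreePair (k₁ k₂ : ℕ) : Prop :=
  ∃ A B : Set V, A.Nonempty ∧ B.Nonempty ∧ Disjoint A B ∧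
    G.HasMinDegreeOn A k₁ ∧ G.HasMinDegreeOn B k₂

variable {G}

lemma hasMinDegreeOn_triangle {a b c : V} (hab : G.Adj a b) (hbc : G.Adj b c) (hca : G.Adj c a) :
    G.HasMinDegreeOn {a, b, c} 2 := by
  have two_le {v x y : V} (hxy : x ≠ y) (hx : x ∈ ({a, b, c} : Set V))
      (hy : y ∈ ({a, b, c} : Set V)) (hvx : G.Adj v x) (hvy : G.Adj v y) :
      2 ≤ (({a, b, c} : Set V) ∩ G.neighborSet v).ncard := by
    rw [← Set.ncard_pair hxy]
    exact Set.ncard_le_ncard (Set.pair_subset ⟨hx, hvx⟩ ⟨hy, hvy⟩) (Set.toFinite _)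
  rintro v (rfl | rfl | rfl)
  · exact two_le hbc.ne (by simp) (by simp) hab hca.symm
  · exact two_le hca.ne (by simp) (by simp) hbc hab.symm
  · exact two_le hab.ne (by simp) (by simp) hca hbc.symm

section Finite

variable [Finite V] {k : ℕ}

lemma ncard_inter_neighborSet_mono {A B : Set V} (h : A ⊆ B) (v : V) :
    (A ∩ G.neighborSet v).ncard ≤ (B ∩ G.neighborSet v).ncard :=
  Set.ncard_le_ncard (Set.inter_subset_inter_left _ h) (Set.toFinite _)

variable (G) in
lemma ncard_inter_add_ncard_compl_inter (A : Set V) (v : V) :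
    (A ∩ G.neighborSet v).ncard + (Aᶜ ∩ G.neighborSet v).ncard = (G.neighborSet v).ncard := by
  rw [Set.inter_comm, Set.inter_comm Aᶜ, ← Set.sdiff_eq,
    Set.ncard_inter_add_ncard_sdiff_eq_ncard _ _ (Set.toFinite _)]

lemma HasMinDegreeOn.sUnion {𝒮 : Set (Set V)} (h : ∀ S ∈ 𝒮, G.HasMinDegreeOn S k) :
    G.HasMinDegreeOn (⋃₀ 𝒮) k := by
  rintro v ⟨S, hS, hv⟩
  exact (h S hS v hv).trans (ncard_inter_neighborSet_mono (Set.subset_sUnion_of_mem hS) v)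

lemma HasMinDegreeOn.insert {A : Set V} {v : V} (hA : G.HasMinDegreeOn A k)
    (hv : k ≤ (A ∩ G.neighborSet v).ncard) : G.HasMinDegreeOn (insert v A) k := by
  rintro u (rfl | hu)
  · exact hv.trans (ncard_inter_neighborSet_mono (Set.subset_insert _ _) u)
  · exact (hA u hu).trans (ncard_inter_neighborSet_mono (Set.subset_insert _ _) u)

theorem hasMinDegPartition_of_hasDisjointMinDegreePair {k₁ k₂ : ℕ}
    (hdeg : ∀ v, k₁ + k₂ ≤ (G.neighborSet v).ncard + 1)
    (h : G.HasDisjointMinDegreePair k₁ k₂) : HasMinDegPartition G k₁ k₂ := by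
  obtain ⟨A, S, hA, hS, hAS, hAk, hSk⟩ := h
  -- `B` is the largest set disjoint from `A` of minimum degree `≥ k₂`; a vertex outside
  -- `A ∪ B` with fewer than `k₁` neighbours outside `B` would have `≥ k₂` neighbours in `B`
  -- and extend it.
  let B := ⋃₀ {S' : Set V | Disjoint S' A ∧ G.HasMinDegreeOn S' k₂}
  have hBA : Disjoint B A := Set.disjoint_sUnion_left.2 fun _ h => h.1
  have hBk : G.HasMinDegreeOn B k₂ := HasMinDegreeOn.sUnion fun _ h => h.2
  have hAB : A ⊆ Bᶜ := hBA.symm.subset_compl_right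
  refine ⟨Bᶜ, B, hA.mono hAB, hS.mono (Set.subset_sUnion_of_mem ⟨hAS.symm, hSk⟩),
    disjoint_compl_left, Set.compl_union_self B, fun v hv => ?_, hBk⟩
  by_cases hvA : v ∈ A
  · exact (hAk v hvA).trans (ncard_inter_neighborSet_mono hAB v)
  by_contra! hlt
  have hvB : k₂ ≤ (B ∩ G.neighborSet v).ncard := by
    have := G.ncard_inter_add_ncard_compl_inter B v
    have := hdeg v
    omega
  have hvB' : insert v B ∈ {S' : Set V | Disjoint S' A ∧ G.HasMinDegreeOn S' k₂} :=
    ⟨Set.disjoint_insert_left.2 ⟨hvA, hBA⟩, hBk.insert hvB⟩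
  exact hv (Set.subset_sUnion_of_mem hvB' (Set.mem_insert v B))

end Finite

section Fintype

variable [Fintype V] [DecidableEq V] [DecidableRel G.Adj]

variable (G)

lemma ncard_coe_inter_neighborSet (A : Finset V) (v : V) :
    ((A : Set V) ∩ G.neighborSet v).ncard = #(A ∩ G.neighborFinset v) := by
  rw [← Set.ncard_coe_finset, coe_inter, coe_neighborFinset]

lemma card_inter_add_card_compl_inter (A : Finset V) (v : V) :
    #(A ∩ G.neighborFinset v) + #(Aᶜ ∩ G.neighborFinset v) = G.degree v := by
  rw [← ncard_coe_inter_neighborSet, ← ncard_coe_inter_neighborSet, coe_compl,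
    ncard_inter_add_ncard_compl_inter, Set.ncard_eq_toFinset_card', ← neighborFinset_def,
    card_neighborFinset_eq_degree]

def cutSize (A : Finset V) : ℕ := ∑ v ∈ A, #(Aᶜ ∩ G.neighborFinset v)

lemma sum_card_inter_neighborFinset_comm (s t : Finset V) :
    ∑ v ∈ s, #(t ∩ G.neighborFinset v) = ∑ u ∈ t, #(s ∩ G.neighborFinset u) := by
  have := sum_card_bipartiteAbove_eq_sum_card_bipartiteBelow G.Adj (s := s) (t := t)
  simp only [bipartiteAbove, bipartiteBelow, ← mem_neighborFinset, filter_mem_eq_inter] at this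
  convert this using 3 with u
  ext v
  simp [G.adj_comm]

lemma cutSize_insert {A : Finset V} {w : V} (hw : w ∉ A) :
    G.cutSize (insert w A) + #(A ∩ G.neighborFinset w) =
      G.cutSize A + #(Aᶜ ∩ G.neighborFinset w) := by
  have hterm : ∀ v ∈ A, #((insert w A)ᶜ ∩ G.neighborFinset v) + (if G.Adj v w then 1 else 0)
      = #(Aᶜ ∩ G.neighborFinset v) := by
    intro v hv
    rw [compl_insert, erase_inter]
    split_ifs with h
    · exact card_erase_add_one (by simp [hw, h])
    · rw [erase_eq_of_notMem (by simp [h]), add_zero]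
  have hw' : (insert w A)ᶜ ∩ G.neighborFinset w = Aᶜ ∩ G.neighborFinset w := by
    rw [compl_insert, erase_inter, erase_eq_of_notMem (by simp)]
  have hcount : ∑ v ∈ A, (if G.Adj v w then 1 else 0) = #(A ∩ G.neighborFinset w) := by
    rw [sum_boole, Nat.cast_id]
    congr 1
    ext v
    simp [G.adj_comm]
  unfold cutSize
  rw [sum_insert hw, hw', ← hcount, add_assoc, ← sum_add_distrib, sum_congr rfl hterm, add_comm]

lemma cutSize_add_sum_card_inter (A : Finset V) :
    G.cutSize A + ∑ v ∈ A, #(A ∩ G.neighborFinset v) = ∑ v ∈ A, G.degree v := by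
  rw [cutSize, ← sum_add_distrib]
  exact sum_congr rfl fun v _ => by rw [add_comm, card_inter_add_card_compl_inter]

variable {G}

lemma exists_card_compl_inter_neighborFinset_lt {k₁ k₂ : ℕ}
    (hpair : ¬ G.HasDisjointMinDegreePair k₁ k₂) {A : Finset V} (hA : A.Nonempty)
    (hAk : G.HasMinDegreeOn A k₁) (hAu : A ≠ univ) :
    ∃ w ∉ A, #(Aᶜ ∩ G.neighborFinset w) < k₂ := by
  by_contra! h
  refine hpair ⟨A, (A : Set V)ᶜ, hA, ?_, disjoint_compl_right, hAk, fun v hv => ?_⟩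
  · rw [← coe_compl, coe_nonempty, nonempty_iff_ne_empty, Ne, compl_eq_empty_iff]
    exact hAu
  · rw [← coe_compl, ncard_coe_inter_neighborSet]
    exact h v (by simpa using hv)

lemma cutSize_add_mul_card_le {A : Finset V} {k : ℕ} (hA : G.HasMinDegreeOn A k) :
    G.cutSize A + k * #A ≤ ∑ v ∈ A, G.degree v := by
  rw [← G.cutSize_add_sum_card_inter A, mul_comm, ← smul_eq_mul]
  gcongr
  exact card_nsmul_le_sum _ _ _ fun v hv => G.ncard_coe_inter_neighborSet A v ▸ hA v hv

lemma mul_le_cutSize {A : Finset V} {d : ℕ} (hdeg : ∀ v, d ≤ G.degree v) :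
    #Aᶜ * (d + 1 - #Aᶜ) ≤ G.cutSize A := by
  rw [cutSize, sum_card_inter_neighborFinset_comm, ← smul_eq_mul]
  refine card_nsmul_le_sum _ _ _ fun u hu => ?_
  have hout : #(Aᶜ ∩ G.neighborFinset u) + 1 ≤ #Aᶜ := by
    rw [← card_erase_add_one hu]
    gcongr
    exact fun x hx => mem_erase.2 ⟨by rintro rfl; simp at hx, (mem_inter.1 hx).1⟩
  have := G.card_inter_add_card_compl_inter A u
  have := hdeg u
  omega

omit [DecidableEq V] in
lemma nonempty_iso_top_of_card_eq {n : ℕ} (hcard : Fintype.card V = n)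
    (hdeg : ∀ v, n ≤ G.degree v + 1) : Nonempty (G ≃g (⊤ : SimpleGraph (Fin n))) := by
  have huniv : ∀ v, G.IsUniversal v := fun v => (G.degree_eq_card_sub_one v).1 <| by
    have := hdeg v
    have := G.degree_lt_card_verts v
    omega
  exact ⟨Fintype.equivFinOfCardEq hcard, fun {u v} =>
    ⟨fun h => huniv u (by simpa using h), fun h => by simpa using h.ne⟩⟩

section NoPair

variable (hpair : ¬ G.HasDisjointMinDegreePair 2 3) (hdeg : ∀ v, 5 ≤ G.degree v)
include hpair hdeg

lemma exists_insert_cutSize_lt {A : Finset V} (hA : A.Nonempty) (hA2 : G.HasMinDegreeOn A 2)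
    (hAu : A ≠ univ) :
    ∃ w ∉ A, G.HasMinDegreeOn ↑(insert w A) 2 ∧ G.cutSize (insert w A) < G.cutSize A := by
  obtain ⟨w, hwA, hw⟩ := exists_card_compl_inter_neighborFinset_lt hpair hA hA2 hAu
  have hdw := G.card_inter_add_card_compl_inter A w
  have hcut := G.cutSize_insert hwA
  have hdegw := hdeg w
  refine ⟨w, hwA, ?_, by omega⟩
  rw [coe_insert]
  exact hA2.insert (by rw [ncard_coe_inter_neighborSet]; omega)

lemma exists_cutSize_add_le (m : ℕ) :
    ∀ d (A : Finset V), A.Nonempty → G.HasMinDegreeOn A 2 → #Aᶜ = m + d →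
      ∃ B : Finset V, #Bᶜ = m ∧ G.cutSize B + d ≤ G.cutSize A := by
  intro d
  induction d with
  | zero => exact fun A _ _ hA => ⟨A, hA, le_rfl⟩
  | succ d ih =>
    intro A hA hA2 hcard
    have hAu : A ≠ univ := by
      rintro rfl
      simp at hcard
    obtain ⟨w, hwA, hw2, hwcut⟩ := exists_insert_cutSize_lt hpair hdeg hA hA2 hAu
    have hcard' : #(insert w A)ᶜ = m + d := by
      rw [compl_insert, card_erase_of_mem (mem_compl.2 hwA), hcard]
      rfl
    obtain ⟨B, hB, hBcut⟩ := ih (insert w A) (insert_nonempty w A) hw2 hcard'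
    exact ⟨B, hB, by omega⟩

lemma exists_degree_eq_five_adj_of_triangle (hcard : 4 ≤ Fintype.card V) {a b c : V}
    (hab : G.Adj a b) (hbc : G.Adj b c) (hca : G.Adj c a) :
    ∃ w, G.degree w = 5 ∧ G.Adj w a ∧ G.Adj w b ∧ G.Adj w c := by
  set T : Finset V := {a, b, c}
  have hT3 : #T ≤ 3 := card_le_three
  have hT2 : G.HasMinDegreeOn T 2 := by
    simpa [T] using hasMinDegreeOn_triangle hab hbc hca
  have hTu : T ≠ univ := by
    intro h
    rw [h, card_univ] at hT3
    omega
  obtain ⟨w, -, hw⟩ := exists_card_compl_inter_neighborFinset_lt hpair (by simp [T]) hT2 hTu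
  have hdw := G.card_inter_add_card_compl_inter T w
  have hdegw := hdeg w
  have hTwT := card_le_card (inter_subset_left : T ∩ G.neighborFinset w ⊆ T)
  have hTw : T ∩ G.neighborFinset w = T :=
    eq_of_subset_of_card_le inter_subset_left (by omega)
  have hadj : ∀ x ∈ T, G.Adj w x := fun x hx =>
    (mem_neighborFinset _ _ _).1 (inter_eq_left.1 hTw hx)
  exact ⟨w, by omega, hadj a (by simp [T]), hadj b (by simp [T]), hadj c (by simp [T])⟩

lemma exists_triangle_of_degree_eq_five (hcard : 4 ≤ Fintype.card V) {a b c : V}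
    (hab : G.Adj a b) (hbc : G.Adj b c) (hca : G.Adj c a) :
    ∃ x y z, G.Adj x y ∧ G.Adj y z ∧ G.Adj z x ∧
      G.degree x = 5 ∧ G.degree y = 5 ∧ G.degree z = 5 := by
  obtain ⟨x, hx, hxa, hxb, -⟩ :=
    exists_degree_eq_five_adj_of_triangle hpair hdeg hcard hab hbc hca
  obtain ⟨y, hy, hya, -, hyx⟩ :=
    exists_degree_eq_five_adj_of_triangle hpair hdeg hcard hab hxb.symm hxa
  obtain ⟨z, hz, -, hzx, hzy⟩ :=
    exists_degree_eq_five_adj_of_triangle hpair hdeg hcard hxa.symm hyx.symm hya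
  exact ⟨x, y, z, hyx.symm, hzy.symm, hzx, hx, hy, hz⟩

theorem card_le_six_of_not_hasDisjointMinDegreePair {a b c : V}
    (hab : G.Adj a b) (hbc : G.Adj b c) (hca : G.Adj c a) : Fintype.card V ≤ 6 := by
  have hn : 6 ≤ Fintype.card V := (hdeg a).trans_lt (G.degree_lt_card_verts a)
  obtain ⟨x, y, z, hxy, hyz, hzx, hx, hy, hz⟩ :=
    exists_triangle_of_degree_eq_five hpair hdeg (by omega) hab hbc hca
  set T : Finset V := {x, y, z}
  have hT3 : #T = 3 := card_eq_three.2 ⟨x, y, z, hxy.ne, hzx.ne.symm, hyz.ne, rfl⟩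
  have hT2 : G.HasMinDegreeOn T 2 := by
    simpa [T] using hasMinDegreeOn_triangle hxy hyz hzx
  have hTcut : G.cutSize T + 2 * 3 ≤ 15 := by
    have := cutSize_add_mul_card_le hT2
    rwa [hT3, sum_insert (by simp [hxy.ne, hzx.ne.symm]), sum_pair hyz.ne, hx, hy, hz] at this
  have hTc : #Tᶜ = 2 + (Fintype.card V - 5) := by
    rw [card_compl, hT3]
    omega
  obtain ⟨B, hB, hBcut⟩ := exists_cutSize_add_le hpair hdeg 2 _ T (by simp [T]) hT2 hTc
  have hB8 := mul_le_cutSize (A := B) hdeg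
  rw [hB] at hB8
  omega

end NoPair

end Fintype

end SimpleGraph

theorem mindeg5_triangle_not_K6_general {V : Type*} [Fintype V] (G : SimpleGraph V)
    (hdeg : ∀ v : V, 5 ≤ (G.neighborSet v).ncard)
    (htri : ∃ a b c : V, G.Adj a b ∧ G.Adj b c ∧ G.Adj c a)
    (hnotK6 : ¬ Nonempty (G ≃g (⊤ : SimpleGraph (Fin 6)))) :
    HasMinDegPartition G 2 3 := by
  classical
  by_cases hpair : G.HasDisjointMinDegreePair 2 3
  · exact G.hasMinDegPartition_of_hasDisjointMinDegreePair (fun v => by linarith [hdeg v]) hpair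
  have hdeg' : ∀ v, 5 ≤ G.degree v := fun v => by
    simpa [Set.ncard_eq_toFinset_card', ← SimpleGraph.neighborFinset_def] using hdeg v
  obtain ⟨a, b, c, hab, hbc, hca⟩ := htri
  have h6 : Fintype.card V = 6 := le_antisymm
    (G.card_le_six_of_not_hasDisjointMinDegreePair hpair hdeg' hab hbc hca)
    ((hdeg' a).trans_lt (G.degree_lt_card_verts a))
  exact absurd (G.nonempty_iso_top_of_card_eq h6 fun v => by linarith [hdeg' v]) hnotK6

/-- Every finite graph with minimum degree at least 5 that contains a triangle and is
not isomorphic to `K₆` has a `(δ ≥ 2, δ ≥ 3)`-partition. -/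
theorem mindeg5_triangle_not_K6 {V : Type*} [Fintype V] [Nonempty V] (G : SimpleGraph V)
    (hdeg : ∀ v : V, 5 ≤ (G.neighborSet v).ncard)
    (htri : ∃ a b c : V, G.Adj a b ∧ G.Adj b c ∧ G.Adj c a)
    (hnotK6 : ¬ Nonempty (G ≃g (⊤ : SimpleGraph (Fin 6)))) :
    HasMinDegPartition G 2 3 :=
  mindeg5_triangle_not_K6_general G hdeg htri hnotK6
end

section
/- Every finite simple graph G with minimum degree at least 5 that is not isomorphic to the complete graph K6 has a (δ≥2, δ≥3)-partition. -/
section Helpers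

open Set SimpleGraph

set_option linter.unusedSectionVars false

variable {V : Type*} [Fintype V]

lemma two_le_ncard_of {S : Set V} {a b : V} (ha : a ∈ S) (hb : b ∈ S) (hab : a ≠ b) :
    2 ≤ S.ncard :=
  (Set.one_lt_ncard S.toFinite).mpr ⟨a, ha, b, hb, hab⟩

lemma three_le_ncard_of {S : Set V} {a b c : V} (ha : a ∈ S) (hb : b ∈ S) (hc : c ∈ S)
    (hab : a ≠ b) (hac : a ≠ c) (hbc : b ≠ c) : 3 ≤ S.ncard := by
  have hsub : ({a, b, c} : Set V) ⊆ S := by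
    intro x hx
    rcases hx with rfl | rfl | rfl <;> assumption
  have h3 : ({a, b, c} : Set V).ncard = 3 := by
    rw [Set.ncard_insert_of_notMem (by simp [hab, hac]) (Set.toFinite _), Set.ncard_pair hbc]
  calc 3 = ({a, b, c} : Set V).ncard := h3.symm
    _ ≤ S.ncard := Set.ncard_le_ncard hsub S.toFinite

lemma ncard_le_two_of_subset_pair {S : Set V} {a b : V} (h : S ⊆ {a, b}) : S.ncard ≤ 2 :=
  le_trans (Set.ncard_le_ncard h (Set.toFinite _))
    (le_trans (Set.ncard_insert_le _ _) (by simp [Set.ncard_singleton]))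

lemma exists_triple_of_two_lt_ncard {S : Set V} (h : 2 < S.ncard) :
    ∃ a b c, a ∈ S ∧ b ∈ S ∧ c ∈ S ∧ a ≠ b ∧ a ≠ c ∧ b ≠ c := by
  obtain ⟨a, ha, b, hb, hab⟩ := (Set.one_lt_ncard S.toFinite).mp (by omega)
  have hsub : ({a, b} : Set V) ⊆ S := by
    intro z hz
    rcases hz with rfl | rfl <;> assumption
  have hdiff : (S \ {a, b}).Nonempty := by
    rw [← Set.ncard_pos (Set.toFinite _)]
    have hd := Set.ncard_diff hsub (Set.toFinite _)
    have hpair : ({a, b} : Set V).ncard = 2 := Set.ncard_pair hab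
    omega
  obtain ⟨c, hc⟩ := hdiff
  have hc1 : c ∈ S := hc.1
  have hc2 : c ∉ ({a, b} : Set V) := hc.2
  simp only [Set.mem_insert_iff, Set.mem_singleton_iff, not_or] at hc2
  exact ⟨a, b, c, ha, hb, hc1, hab, fun h => hc2.1 h.symm, fun h => hc2.2 h.symm⟩

lemma ncard_compl_inter {G : SimpleGraph V} {v : V} (hdeg : 5 ≤ (G.neighborSet v).ncard)
    {S : Set V} {m : ℕ} (h : (S ∩ G.neighborSet v).ncard ≤ m) :
    5 - m ≤ (Sᶜ ∩ G.neighborSet v).ncard := by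
  have hun : G.neighborSet v = (S ∩ G.neighborSet v) ∪ (Sᶜ ∩ G.neighborSet v) := by
    ext x; by_cases hx : x ∈ S <;> simp [hx]
  have hle : (G.neighborSet v).ncard ≤ (S ∩ G.neighborSet v).ncard
      + (Sᶜ ∩ G.neighborSet v).ncard := by
    conv_lhs => rw [hun]
    exact Set.ncard_union_le _ _
  omega

lemma compl_nonempty_of_ncard_lt {S : Set V} (h : S.ncard < Fintype.card V) :
    Sᶜ.Nonempty := by
  rw [Set.nonempty_compl]
  intro heq
  rw [heq, Set.ncard_univ, Nat.card_eq_fintype_card] at h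
  exact lt_irrefl _ h

lemma ncard_le_one_of_subset_singleton {S : Set V} {a : V} (h : S ⊆ {a}) : S.ncard ≤ 1 :=
  le_trans (Set.ncard_le_ncard h (Set.toFinite _)) (by simp)

lemma ncard_triple_le {a b c : V} : ({a, b, c} : Set V).ncard ≤ 3 := by
  refine le_trans (Set.ncard_insert_le _ _) ?_
  have h2 : ({b, c} : Set V).ncard ≤ 2 :=
    le_trans (Set.ncard_insert_le _ _) (by simp [Set.ncard_singleton])
  omega

section Walks

variable {G : SimpleGraph V} [DecidableEq V]

omit [Fintype V] in
lemma end_mem_support_tail {u w : V} (p : G.Walk u w) (hp : ¬ p.Nil) : w ∈ p.support.tail := by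
  cases p with
  | nil => exact absurd Walk.nil_nil hp
  | cons h q => simpa using Walk.end_mem_support q

omit [Fintype V] in
lemma closed_mem_support_tail {v : V} (c : G.Walk v v) (hc : ¬ c.Nil) {x : V}
    (hx : x ∈ c.support) : x ∈ c.support.tail := by
  rcases (Walk.mem_support_iff c).mp hx with rfl | h
  · exact end_mem_support_tail c hc
  · exact h

omit [Fintype V] in
lemma rotate_length_eq {v x : V} (c : G.Walk v v) (h : x ∈ c.support) :
    (c.rotate x h).length = c.length := by
  have hspec := congrArg Walk.length (c.take_spec h)
  rw [Walk.length_append] at hspec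
  rw [Walk.rotate, Walk.length_append]
  omega

omit [Fintype V] in
lemma mem_rotate_support {v x : V} (c : G.Walk v v) (h : x ∈ c.support) (hnil : ¬ c.Nil) {z : V} :
    z ∈ (c.rotate x h).support ↔ z ∈ c.support := by
  have hperm := (Walk.support_rotate c x h).perm
  have hnil' : ¬ (c.rotate x h).Nil := by
    rw [Walk.nil_iff_length_eq] at hnil ⊢
    rw [rotate_length_eq]
    exact hnil
  constructor
  · intro hz
    exact (Walk.mem_support_iff _).mpr
      (Or.inr (hperm.mem_iff.mp (closed_mem_support_tail _ hnil' hz)))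
  · intro hz
    exact (Walk.mem_support_iff _).mpr
      (Or.inr (hperm.mem_iff.mpr (closed_mem_support_tail _ hnil hz)))

omit [Fintype V] in
lemma takeUntil_length_add {u w x : V} (p : G.Walk u w) (h : x ∈ p.support) :
    (p.takeUntil x h).length + (p.dropUntil x h).length = p.length := by
  have := congrArg Walk.length (p.take_spec h)
  rwa [Walk.length_append] at this

omit [Fintype V] in
lemma length_zero_eq {u w : V} {p : G.Walk u w} (h : p.length = 0) : u = w := by
  cases p with
  | nil => rfl
  | cons h' q => simp at h

omit [Fintype V] in
lemma cycle_split_support {x : V} {c : G.Walk x x} {y : V} (hy : y ∈ c.support) :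
    c.support.tail = (c.takeUntil y hy).support.tail ++ (c.dropUntil y hy).support.tail := by
  have hs : c.support = (c.takeUntil y hy).support ++ (c.dropUntil y hy).support.tail := by
    conv_lhs => rw [← c.take_spec hy]
    exact Walk.support_append _ _
  rw [hs, List.tail_append_of_ne_nil (Walk.support_ne_nil _)]

omit [Fintype V] in
lemma cycle_path_takeUntil {x : V} {c : G.Walk x x} (hc : c.IsCycle) {y : V}
    (hy : y ∈ c.support) (hyx : y ≠ x) : (c.takeUntil y hy).IsPath := by
  have hnodup := hc.support_nodup
  rw [cycle_split_support hy] at hnodup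
  apply Walk.IsPath.mk'
  rw [Walk.support_eq_cons (c.takeUntil y hy)]
  refine List.nodup_cons.mpr ⟨?_, hnodup.of_append_left⟩
  intro hxt
  have hdnil : ¬ (c.dropUntil y hy).Nil := Walk.not_nil_of_ne hyx
  have hxd : x ∈ (c.dropUntil y hy).support.tail := end_mem_support_tail _ hdnil
  exact (List.disjoint_of_nodup_append hnodup) hxt hxd

omit [Fintype V] in
lemma cycle_path_dropUntil {x : V} {c : G.Walk x x} (hc : c.IsCycle) {y : V}
    (hy : y ∈ c.support) (hyx : y ≠ x) : (c.dropUntil y hy).IsPath := by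
  have hnodup := hc.support_nodup
  rw [cycle_split_support hy] at hnodup
  apply Walk.IsPath.mk'
  rw [Walk.support_eq_cons (c.dropUntil y hy)]
  refine List.nodup_cons.mpr ⟨?_, hnodup.of_append_right⟩
  intro hyd
  have htnil : ¬ (c.takeUntil y hy).Nil := by
    intro hn
    exact hyx (length_zero_eq (Walk.nil_iff_length_eq.mp hn)).symm
  have hyt : y ∈ (c.takeUntil y hy).support.tail := end_mem_support_tail _ htnil
  exact (List.disjoint_of_nodup_append hnodup) hyt hyd

omit [Fintype V] in
lemma cycle_of_path {u s t : V} (hadj1 : G.Adj u s) (hadj2 : G.Adj t u) (hst : s ≠ t)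
    (p : G.Walk s t) (hp : p.IsPath) (hu : u ∉ p.support) :
    ∃ (w : G.Walk u u), w.IsCycle ∧ w.length = p.length + 2 := by
  refine ⟨Walk.cons hadj1 (p.concat hadj2), ?_, by simp [Walk.length_concat]⟩
  rw [Walk.cons_isCycle_iff]
  constructor
  · apply Walk.IsPath.mk'
    rw [Walk.support_concat]
    rw [List.nodup_append]
    refine ⟨hp.support_nodup, List.nodup_singleton u, ?_⟩
    intro z hz w hw hzw
    rw [List.mem_singleton] at hw
    subst hw hzw
    exact hu hz
  · rw [Walk.edges_concat, List.concat_eq_append]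
    intro hmem
    rcases List.mem_append.mp hmem with hmem' | heq
    · exact hu (Walk.fst_mem_support_of_mem_edges p hmem')
    · rw [List.mem_singleton, Sym2.eq_iff] at heq
      rcases heq with ⟨h1, h2⟩ | ⟨h1, h2⟩
      · subst h1
        exact G.irrefl hadj2
      · exact hst h2

omit [Fintype V] in
lemma edge_mem_path_ends {a b : V} {q : G.Walk a b} (hq : q.IsPath) (he : s(a, b) ∈ q.edges) :
    q.length = 1 := by
  cases q with
  | nil => simp at he
  | cons h q' =>
    rename_i m
    rw [Walk.edges_cons] at he
    rcases List.mem_cons.mp he with heq | hmem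
    · rw [Sym2.eq_iff] at heq
      rcases heq with ⟨-, rfl⟩ | ⟨h1, h2⟩
      · -- q' : Walk b b is a path from within a path, so it is nil
        cases q' with
        | nil => simp
        | cons h2 q2 =>
          exfalso
          have := hq.support_nodup
          simp only [Walk.support_cons, List.nodup_cons] at this
          exact this.2.1 (by simpa using Walk.end_mem_support q2)
      · exfalso
        subst h1
        exact G.irrefl h
    · exfalso
      have := hq.support_nodup
      simp only [Walk.support_cons, List.nodup_cons] at this
      exact this.1 (Walk.fst_mem_support_of_mem_edges q' hmem)

lemma not_acyclic_of_min_degree (hdeg2 : ∀ v : V, 2 ≤ (G.neighborSet v).ncard)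
    [Nonempty V] : ¬ G.IsAcyclic := by
  intro hacyc
  have key : ∀ n : ℕ, ∃ (x y : V) (p : G.Walk x y), p.IsPath ∧ p.length = n := by
    intro n
    induction n with
    | zero => exact ⟨Classical.arbitrary V, Classical.arbitrary V, Walk.nil, Walk.IsPath.nil, rfl⟩
    | succ n ih =>
      obtain ⟨x, y, p, hp, hlen⟩ := ih
      by_cases hext : ∃ z ∈ G.neighborSet y, z ∉ p.support
      · obtain ⟨z, hz1, hz2⟩ := hext
        refine ⟨z, x, Walk.cons (hz1 : G.Adj y z).symm p.reverse, ?_, by simp [hlen]⟩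
        exact Walk.IsPath.cons hp.reverse (by simpa [Walk.support_reverse] using hz2)
      · exfalso
        push_neg at hext
        obtain ⟨z1, hz1, z2, hz2, hz12⟩ :=
          (Set.one_lt_ncard (s := G.neighborSet y) (Set.toFinite _)).mp
          (by have := hdeg2 y; omega)
        have hkey : ∀ z, z ∈ G.neighborSet y →
            ∃ (hzs : z ∈ p.support), (p.dropUntil z hzs).length = 1 := by
          intro z hz
          have hzs : z ∈ p.support := hext z hz
          refine ⟨hzs, ?_⟩
          have hd : (p.dropUntil z hzs).IsPath := hp.dropUntil hzs
          by_cases hmem : s(y, z) ∈ (p.dropUntil z hzs).edges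
          · have : s(z, y) ∈ (p.dropUntil z hzs).edges := by rwa [Sym2.eq_swap] at hmem
            exact edge_mem_path_ends hd this
          · exfalso
            exact hacyc (Walk.cons (hz : G.Adj y z) (p.dropUntil z hzs))
              ((Walk.cons_isCycle_iff _ _).mpr ⟨hd, hmem⟩)
        -- both z1 and z2 are the penultimate vertex of p, contradiction
        have hpen : ∀ z, z ∈ G.neighborSet y → ∃ (hzz : G.Adj z y) (t : G.Walk x z),
            p.reverse = Walk.cons hzz.symm t.reverse := by
          intro z hz
          obtain ⟨hzs, hd1⟩ := hkey z hz
          set d := p.dropUntil z hzs with hd_def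
          have : ∃ (hzz : G.Adj z y), d = Walk.cons hzz Walk.nil := by
            cases hd : d with
            | nil =>
              rw [hd] at hd1
              simp at hd1
            | cons ha q =>
              rename_i m
              rw [hd] at hd1
              simp only [Walk.length_cons] at hd1
              have hq0 : q.length = 0 := by omega
              have hm : m = y := length_zero_eq hq0
              subst hm
              have hq : q = Walk.nil := Walk.nil_iff_eq_nil.mp (Walk.length_eq_zero_iff.mp hq0)
              subst hq
              exact ⟨ha, rfl⟩
          obtain ⟨hzz, hdeq⟩ := this
          refine ⟨hzz, p.takeUntil z hzs, ?_⟩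
          have hps : p = (p.takeUntil z hzs).append (Walk.cons hzz Walk.nil) := by
            conv_lhs => rw [← p.take_spec hzs]
            rw [← hd_def, hdeq]
          conv_lhs => rw [hps]
          rw [Walk.reverse_append]
          simp
        obtain ⟨ha1, t1, he1⟩ := hpen z1 hz1
        obtain ⟨ha2, t2, he2⟩ := hpen z2 hz2
        have hcc := he1.symm.trans he2
        injection hcc with hinj1 hinj2 hinj3
        exact hz12 hinj2
  obtain ⟨x, y, p, hp, hlen⟩ := key (Fintype.card V)
  have := hp.length_lt
  omega

end Walks

omit [Fintype V] in
lemma mk_part {G : SimpleGraph V} {V1 : Set V} (h1 : V1.Nonempty) (h2 : V1ᶜ.Nonempty)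
    (hmin1 : ∀ v ∈ V1, 2 ≤ (V1 ∩ G.neighborSet v).ncard)
    (hmin2 : ∀ v ∈ V1ᶜ, 3 ≤ (V1ᶜ ∩ G.neighborSet v).ncard) :
    HasMinDegPartition G 2 3 :=
  ⟨V1, V1ᶜ, h1, h2, disjoint_compl_right, Set.union_compl_self V1, hmin1, hmin2⟩

end Helpers

open SimpleGraph in
/-- Every finite graph with minimum degree at least 5 that is not isomorphic to `K₆`
has a `(δ ≥ 2, δ ≥ 3)`-partition. -/
theorem mindeg5_not_K6 {V : Type*} [Fintype V] [Nonempty V] (G : SimpleGraph V)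
    (hdeg : ∀ v : V, 5 ≤ (G.neighborSet v).ncard)
    (hnotK6 : ¬ Nonempty (G ≃g (⊤ : SimpleGraph (Fin 6)))) :
    HasMinDegPartition G 2 3 := by
  classical
  have hirr : ∀ v : V, v ∉ G.neighborSet v := by
    intro v hv
    exact G.irrefl hv
  have hcard6 : 6 ≤ Fintype.card V := by
    have v := Classical.arbitrary V
    have hsub : insert v (G.neighborSet v) ⊆ Set.univ := Set.subset_univ _
    have h1 : (insert v (G.neighborSet v)).ncard = (G.neighborSet v).ncard + 1 :=
      Set.ncard_insert_of_notMem (hirr v) (Set.toFinite _)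
    have h2 : (insert v (G.neighborSet v)).ncard ≤ (Set.univ : Set V).ncard :=
      Set.ncard_le_ncard hsub (Set.toFinite _)
    have h3 : (Set.univ : Set V).ncard = Fintype.card V := by
      rw [Set.ncard_univ, Nat.card_eq_fintype_card]
    have := hdeg v
    omega
  have hcard7 : 7 ≤ Fintype.card V := by
    rcases Nat.lt_or_ge (Fintype.card V) 7 with hlt | hge
    · exfalso
      have hc6 : Fintype.card V = 6 := by omega
      have hadj : ∀ x y : V, x ≠ y → G.Adj x y := by
        intro x y hxy
        have hsub : G.neighborSet x ⊆ {x}ᶜ := by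
          intro z hz
          simp only [Set.mem_compl_iff, Set.mem_singleton_iff]
          rintro rfl
          exact hirr _ hz
        have hcompl : ({x}ᶜ : Set V).ncard = 5 := by
          have : ({x}ᶜ : Set V) = Set.univ \ {x} := by
            ext z; simp
          rw [this, Set.ncard_diff (by simp) (Set.toFinite _)]
          rw [Set.ncard_univ, Nat.card_eq_fintype_card, hc6, Set.ncard_singleton]
        have heq : G.neighborSet x = {x}ᶜ :=
          Set.eq_of_subset_of_ncard_le hsub (by rw [hcompl]; exact hdeg x) (Set.toFinite _)
        have : y ∈ G.neighborSet x := by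
          rw [heq]
          simpa using hxy.symm
        exact this
      apply hnotK6
      refine ⟨⟨Fintype.equivFinOfCardEq hc6, ?_⟩⟩
      intro a b
      simp only [SimpleGraph.top_adj, ne_eq, EmbeddingLike.apply_eq_iff_eq]
      constructor
      · intro hne
        exact hadj a b hne
      · intro hab
        exact G.ne_of_adj hab
    · exact hge
  have hcompl3 : ∀ a b c : V, (({a, b, c} : Set V)ᶜ).Nonempty := by
    intro a b c
    exact compl_nonempty_of_ncard_lt (lt_of_le_of_lt ncard_triple_le (by omega))
  by_cases htri : ∃ x y z : V, G.Adj x y ∧ G.Adj x z ∧ G.Adj y z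
  · -- there is a triangle: use a maximum clique
    obtain ⟨x0, y0, z0, hxy, hxz, hyz⟩ := htri
    have hcl3 : G.IsClique (({x0, y0, z0} : Finset V) : Set V) := by
      intro p hp q hq hpq
      simp only [Finset.coe_insert, Set.mem_insert_iff, Finset.coe_singleton,
        Set.mem_singleton_iff] at hp hq
      rcases hp with rfl | rfl | rfl <;> rcases hq with rfl | rfl | rfl <;>
        first
          | exact absurd rfl hpq
          | assumption
          | exact hxy.symm
          | exact hxz.symm
          | exact hyz.symm
    have hfam : (Finset.univ.powerset.filter
        (fun s : Finset V => G.IsClique (s : Set V))).Nonempty := by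
      refine ⟨{x0, y0, z0}, ?_⟩
      simp only [Finset.mem_filter, Finset.mem_powerset]
      exact ⟨Finset.subset_univ _, hcl3⟩
    obtain ⟨K, hKmem, hKmax⟩ := Finset.exists_max_image _ Finset.card hfam
    have hKclique : G.IsClique (K : Set V) := by
      simp only [Finset.mem_filter] at hKmem
      exact hKmem.2
    have hKbig : ∀ s : Finset V, G.IsClique (s : Set V) → s.card ≤ K.card := by
      intro s hs
      apply hKmax
      simp only [Finset.mem_filter, Finset.mem_powerset]
      exact ⟨Finset.subset_univ _, hs⟩
    have hK3 : 3 ≤ K.card := by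
      have hcard : ({x0, y0, z0} : Finset V).card = 3 := by
        rw [Finset.card_insert_of_notMem (by simp [G.ne_of_adj hxy, G.ne_of_adj hxz]),
          Finset.card_insert_of_notMem (by simp [G.ne_of_adj hyz]), Finset.card_singleton]
      rw [← hcard]
      exact hKbig _ hcl3
    have hKadj : ∀ a ∈ K, ∀ b ∈ K, a ≠ b → G.Adj a b := by
      intro a ha b hb hab
      exact hKclique ha hb hab
    have hKmaxl : ∀ v : V, v ∉ K → ∃ w ∈ K, ¬ G.Adj v w := by
      intro v hv
      by_contra hcon
      push_neg at hcon
      have hins : G.IsClique ((insert v K : Finset V) : Set V) := by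
        rw [Finset.coe_insert]
        refine hKclique.insert ?_
        intro b hb hbv
        exact hcon b hb
      have := hKbig _ hins
      rw [Finset.card_insert_of_notMem hv] at this
      omega
    have hKsetcard : (K : Set V).ncard = K.card := Set.ncard_coe_finset K
    -- bound on neighbors in K for outside vertices
    have hKout : ∀ v : V, v ∉ K → ((K : Set V) ∩ G.neighborSet v).ncard ≤ K.card - 1 := by
      intro v hv
      obtain ⟨w, hwK, hwv⟩ := hKmaxl v hv
      have hsub : (K : Set V) ∩ G.neighborSet v ⊆ (K : Set V) \ {w} := by
        rintro z ⟨hzK, hzN⟩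
        refine ⟨hzK, ?_⟩
        simp only [Set.mem_singleton_iff]
        rintro rfl
        exact hwv hzN
      have hdiff : ((K : Set V) \ {w}).ncard = K.card - 1 := by
        rw [Set.ncard_diff (by simpa using hwK) (Set.toFinite _), hKsetcard,
          Set.ncard_singleton]
      rw [← hdiff]
      exact Set.ncard_le_ncard hsub (Set.toFinite _)
    rcases Nat.lt_or_ge K.card 5 with hKlt5 | hK5
    · rcases Nat.lt_or_ge K.card 4 with hKlt4 | hK4
      · -- K.card = 3 : V1 = K
        have hK3' : K.card = 3 := by omega
        refine mk_part (V1 := (K : Set V)) ?_ ?_ ?_ ?_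
        · obtain ⟨k, hk⟩ := Finset.card_pos.mp (by omega : 0 < K.card)
          exact ⟨k, by simpa using hk⟩
        · exact compl_nonempty_of_ncard_lt (by rw [hKsetcard]; omega)
        · intro v hv
          have hvK : v ∈ K := by simpa using hv
          have herase : 1 < (K.erase v).card := by
            rw [Finset.card_erase_of_mem hvK]; omega
          obtain ⟨p, hp, q, hq, hpq⟩ := Finset.one_lt_card.mp herase
          have hpK := Finset.mem_of_mem_erase hp
          have hqK := Finset.mem_of_mem_erase hq
          exact two_le_ncard_of
            ⟨by simpa using hpK, hKadj v hvK p hpK (Ne.symm (Finset.ne_of_mem_erase hp))⟩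
            ⟨by simpa using hqK, hKadj v hvK q hqK (Ne.symm (Finset.ne_of_mem_erase hq))⟩ hpq
        · intro v hv
          have hvK : v ∉ K := by simpa using hv
          have := hKout v hvK
          have h2 : ((K : Set V) ∩ G.neighborSet v).ncard ≤ 2 := by omega
          have := ncard_compl_inter (hdeg v) h2
          omega
      · -- K.card = 4 : V1 = complement of K
        have hK4' : K.card = 4 := by omega
        refine mk_part (V1 := ((K : Set V))ᶜ) ?_ ?_ ?_ ?_
        · exact compl_nonempty_of_ncard_lt (by rw [hKsetcard]; omega)
        · rw [compl_compl]
          obtain ⟨k, hk⟩ := Finset.card_pos.mp (by omega : 0 < K.card)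
          exact ⟨k, by simpa using hk⟩
        · intro v hv
          have hvK : v ∉ K := by simpa using hv
          have := hKout v hvK
          have h3 : ((K : Set V) ∩ G.neighborSet v).ncard ≤ 3 := by omega
          have := ncard_compl_inter (hdeg v) h3
          omega
        · intro v hv
          rw [compl_compl] at hv ⊢
          have hvK : v ∈ K := by simpa using hv
          have hsub : (K : Set V) \ {v} ⊆ (K : Set V) ∩ G.neighborSet v := by
            rintro z ⟨hzK, hzv⟩
            simp only [Set.mem_singleton_iff] at hzv
            exact ⟨hzK, hKadj v hvK z (by simpa using hzK) (Ne.symm hzv)⟩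
          have hdiff : ((K : Set V) \ {v}).ncard = 3 := by
            rw [Set.ncard_diff (by simpa using hvK) (Set.toFinite _), hKsetcard,
              Set.ncard_singleton, hK4']
          calc 3 = ((K : Set V) \ {v}).ncard := hdiff.symm
            _ ≤ _ := Set.ncard_le_ncard hsub (Set.toFinite _)
    · -- K.card ≥ 5
      set F : Set V := ((K : Set V))ᶜ with hF_def
      set fam : Set (Set V) :=
        {S : Set V | S ⊆ F ∧ ∀ v ∈ S, 2 ≤ (S ∩ G.neighborSet v).ncard} with hfam_def
      set A : Set V := ⋃₀ fam with hA_def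
      have hAF : A ⊆ F := Set.sUnion_subset (fun S hS => hS.1)
      have hA1 : ∀ v ∈ A, 2 ≤ (A ∩ G.neighborSet v).ncard := by
        intro v hv
        obtain ⟨S, hS, hvS⟩ := hv
        refine le_trans (hS.2 v hvS) (Set.ncard_le_ncard ?_ (Set.toFinite _))
        exact Set.inter_subset_inter_left _ (Set.subset_sUnion_of_mem hS)
      have hAmax : ∀ v ∈ F, v ∉ A → (A ∩ G.neighborSet v).ncard ≤ 1 := by
        intro v hvF hvA
        by_contra hcon
        push_neg at hcon
        have h2 : 2 ≤ (A ∩ G.neighborSet v).ncard := hcon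
        have hmem : insert v A ∈ fam := by
          constructor
          · exact Set.insert_subset hvF hAF
          · intro x hx
            rcases Set.mem_insert_iff.mp hx with rfl | hxA
            · refine le_trans h2 (Set.ncard_le_ncard ?_ (Set.toFinite _))
              exact Set.inter_subset_inter_left _ (Set.subset_insert _ _)
            · refine le_trans (hA1 x hxA) (Set.ncard_le_ncard ?_ (Set.toFinite _))
              exact Set.inter_subset_inter_left _ (Set.subset_insert _ _)
        exact hvA (Set.subset_sUnion_of_mem hmem (Set.mem_insert v A))
      by_cases hA : A.Nonempty
      · -- V1 = A
        refine mk_part (V1 := A) hA ?_ ?_ ?_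
        · obtain ⟨k, hk⟩ := Finset.card_pos.mp (by omega : 0 < K.card)
          refine ⟨k, ?_⟩
          intro hkA
          exact (hAF hkA) (by simpa using hk)
        · exact hA1
        · intro v hv
          by_cases hvK : v ∈ K
          · have hsub : (K : Set V) \ {v} ⊆ Aᶜ ∩ G.neighborSet v := by
              rintro z ⟨hzK, hzv⟩
              simp only [Set.mem_singleton_iff] at hzv
              refine ⟨fun hzA => (hAF hzA) hzK, hKadj v hvK z (by simpa using hzK) (Ne.symm hzv)⟩
            have hdiff : ((K : Set V) \ {v}).ncard = K.card - 1 := by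
              rw [Set.ncard_diff (by simpa using hvK) (Set.toFinite _), hKsetcard,
                Set.ncard_singleton]
            have hle := Set.ncard_le_ncard hsub (Set.toFinite _)
            omega
          · have hvF : v ∈ F := hvK
            have h1 : (A ∩ G.neighborSet v).ncard ≤ 1 := hAmax v hvF hv
            have := ncard_compl_inter (hdeg v) h1
            omega
      · -- A is empty
        have hAempty : A = ∅ := Set.not_nonempty_iff_eq_empty.mp hA
        have hforest : ∀ S : Set V, S ⊆ F → S.Nonempty →
            ∃ v ∈ S, (S ∩ G.neighborSet v).ncard ≤ 1 := by
          intro S hSF hSne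
          by_contra hcon
          push_neg at hcon
          have hmem : S ∈ fam := ⟨hSF, fun v hv => hcon v hv⟩
          obtain ⟨s0, hs0⟩ := hSne
          have : s0 ∈ A := Set.subset_sUnion_of_mem hmem hs0
          rw [hAempty] at this
          exact this
        by_cases hF : F.Nonempty
        · -- some vertex outside K
          obtain ⟨u, huF, hudeg⟩ := hforest F (le_refl _) hF
          have huK : u ∉ K := fun h => huF (by simpa using h)
          have hXu : 4 ≤ ((K : Set V) ∩ G.neighborSet u).ncard := by
            have := ncard_compl_inter (hdeg u) hudeg
            rw [hF_def, compl_compl] at this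
            omega
          have hfzero : ∀ f, f ∈ F ∩ G.neighborSet u → ∀ f', f' ∈ F ∩ G.neighborSet u → f = f' := by
            intro f hf f' hf'
            by_contra hne
            have := two_le_ncard_of hf hf' hne
            omega
          by_cases hcase1 : ∃ f0 ∈ F ∩ G.neighborSet u,
              ∃ a ∈ (K : Set V) ∩ G.neighborSet u, G.Adj f0 a
          · -- V1 = {u, f0, a}
            obtain ⟨f0, hf0, a, ⟨haK, haN⟩, hf0a⟩ := hcase1
            have huf0 : G.Adj u f0 := hf0.2
            have hua : G.Adj u a := haN
            have hne_uf0 : u ≠ f0 := G.ne_of_adj huf0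
            have hne_ua : u ≠ a := G.ne_of_adj hua
            have hne_f0a : f0 ≠ a := fun h => (hf0.1 : f0 ∈ F) (h ▸ (by simpa using haK))
            refine mk_part (V1 := ({u, f0, a} : Set V)) ⟨u, by simp⟩ (hcompl3 _ _ _) ?_ ?_
            · intro v hv
              rcases hv with rfl | rfl | rfl
              · exact two_le_ncard_of (a := f0) (b := a) ⟨by simp, huf0⟩ ⟨by simp, hua⟩ hne_f0a
              · exact two_le_ncard_of (a := u) (b := a) ⟨by simp, huf0.symm⟩ ⟨by simp, hf0a⟩ hne_ua
              · exact two_le_ncard_of (a := u) (b := f0) ⟨by simp, hua.symm⟩ ⟨by simp, hf0a.symm⟩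
                  hne_uf0
            · intro v hv
              simp only [Set.mem_compl_iff, Set.mem_insert_iff, Set.mem_singleton_iff,
                not_or] at hv
              obtain ⟨hvu, hvf0, hva⟩ := hv
              by_cases hvK : v ∈ K
              · -- at least K \ {a, v} remains
                have hsub : (K : Set V) \ {a, v} ⊆ ({u, f0, a} : Set V)ᶜ ∩ G.neighborSet v := by
                  rintro z ⟨hzK, hz⟩
                  simp only [Set.mem_insert_iff, Set.mem_singleton_iff, not_or] at hz
                  constructor
                  · simp only [Set.mem_compl_iff, Set.mem_insert_iff, Set.mem_singleton_iff, not_or]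
                    refine ⟨?_, ?_, hz.1⟩
                    · rintro rfl
                      exact huK (by simpa using hzK)
                    · rintro rfl
                      exact hf0.1 hzK
                  · exact hKadj v hvK z (by simpa using hzK) (Ne.symm hz.2)
                have hsubav : ({a, v} : Set V) ⊆ (K : Set V) := by
                  rintro z hz
                  rcases hz with rfl | rfl
                  · exact haK
                  · simpa using hvK
                have hd2 : ((K : Set V) \ {a, v}).ncard
                    = (K : Set V).ncard - ({a, v} : Set V).ncard :=
                  Set.ncard_diff hsubav (Set.toFinite _)
                have hpair : ({a, v} : Set V).ncard ≤ 2 := ncard_le_two_of_subset_pair (le_refl _)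
                have hle := Set.ncard_le_ncard hsub (Set.toFinite _)
                rw [hKsetcard] at hd2
                omega
              · -- v in F, v ≠ u, f0
                have hsub : ({u, f0, a} : Set V) ∩ G.neighborSet v ⊆ {f0, a} := by
                  rintro z ⟨hz1, hz2⟩
                  rcases hz1 with h | h | h
                  · exfalso
                    rw [h] at hz2
                    have hvFu : v ∈ F ∩ G.neighborSet u := ⟨by simpa [hF_def] using hvK, hz2.symm⟩
                    exact hvf0 (hfzero v hvFu f0 hf0)
                  · rw [h]
                    exact Set.mem_insert _ _
                  · rw [h]
                    exact Set.mem_insert_of_mem _ rfl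
                have h2 : (({u, f0, a} : Set V) ∩ G.neighborSet v).ncard ≤ 2 :=
                  ncard_le_two_of_subset_pair hsub
                have := ncard_compl_inter (hdeg v) h2
                omega
          · -- case (ii): choose a, b in K ∩ N(u) covering the poor vertices
            push_neg at hcase1
            set X : Set V := (K : Set V) ∩ G.neighborSet u with hX_def
            set poor : Set V := {w | w ∈ (K : Set V) ∧ (F \ {u}) ∩ G.neighborSet w = ∅}
              with hpoor_def
            have hXsub : X ⊆ (K : Set V) := Set.inter_subset_left
            have hwb : ∀ a b w : V, a ∈ X → b ∈ X → a ≠ b → w ∈ (K : Set V) → w ≠ a → w ≠ b →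
                (w ∉ poor ∨ 6 ≤ K.card) →
                3 ≤ (({u, a, b} : Set V)ᶜ ∩ G.neighborSet w).ncard := by
              intro a b w haX hbX hab hwK hwa hwb hcase
              have hsubabw : ({a, b, w} : Set V) ⊆ (K : Set V) := by
                rintro z hz
                rcases hz with rfl | rfl | rfl
                · exact hXsub haX
                · exact hXsub hbX
                · exact hwK
              have htriple : ({a, b, w} : Set V).ncard = 3 := by
                rw [Set.ncard_insert_of_notMem (by simp [hab, Ne.symm hwa]) (Set.toFinite _),
                  Set.ncard_pair (Ne.symm hwb)]
              have hD : ((K : Set V) \ ({a, b, w} : Set V)).ncard = K.card - 3 := by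
                rw [Set.ncard_diff hsubabw (Set.toFinite _), hKsetcard, htriple]
              have hDsub : (K : Set V) \ ({a, b, w} : Set V) ⊆
                  ({u, a, b} : Set V)ᶜ ∩ G.neighborSet w := by
                rintro z ⟨hzK, hz⟩
                simp only [Set.mem_insert_iff, Set.mem_singleton_iff, not_or] at hz
                constructor
                · simp only [Set.mem_compl_iff, Set.mem_insert_iff, Set.mem_singleton_iff, not_or]
                  exact ⟨fun h => huK (h ▸ (by simpa using hzK)), hz.1, hz.2.1⟩
                · exact hKadj w (by simpa using hwK) z (by simpa using hzK) (Ne.symm hz.2.2)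
              rcases hcase with hnp | h6
              · -- w not poor : has a neighbor in F \ {u}
                have hne : ((F \ {u}) ∩ G.neighborSet w).Nonempty := by
                  rw [Set.nonempty_iff_ne_empty]
                  intro hempty
                  exact hnp ⟨hwK, hempty⟩
                obtain ⟨f', hf'⟩ := hne
                have hf'K : f' ∉ (K : Set V) := hf'.1.1
                have hsubT : insert f' ((K : Set V) \ ({a, b, w} : Set V)) ⊆
                    ({u, a, b} : Set V)ᶜ ∩ G.neighborSet w := by
                  rintro z (rfl | hz)
                  · constructor
                    · simp only [Set.mem_compl_iff, Set.mem_insert_iff, Set.mem_singleton_iff,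
                        not_or]
                      exact ⟨fun h => hf'.1.2 (by simp [h]), fun h => hf'K (h ▸ hXsub haX),
                        fun h => hf'K (h ▸ hXsub hbX)⟩
                    · exact hf'.2
                  · exact hDsub hz
                have hT : (insert f' ((K : Set V) \ ({a, b, w} : Set V))).ncard
                    = ((K : Set V) \ ({a, b, w} : Set V)).ncard + 1 :=
                  Set.ncard_insert_of_notMem (fun h => hf'K h.1) (Set.toFinite _)
                have hle := Set.ncard_le_ncard hsubT (Set.toFinite _)
                omega
              · have hle := Set.ncard_le_ncard hDsub (Set.toFinite _)
                omega
            have hX2 : 1 < X.ncard := by omega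
            have hchoice : ∃ a b : V, a ∈ X ∧ b ∈ X ∧ a ≠ b ∧
                ∀ w, w ∈ (K : Set V) → w ≠ a → w ≠ b →
                  3 ≤ (({u, a, b} : Set V)ᶜ ∩ G.neighborSet w).ncard := by
              rcases Nat.lt_or_ge K.card 6 with h5 | h6
              · -- K.card = 5, analyse poor vertices
                have hK5' : K.card = 5 := by omega
                have hpoorX : poor ⊆ X := by
                  intro w hw
                  obtain ⟨hwK, hwE⟩ := hw
                  refine ⟨hwK, ?_⟩
                  by_contra hwnu
                  have hsub : G.neighborSet w ⊆ (K : Set V) \ {w} := by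
                    intro z hz
                    by_cases hzK : z ∈ (K : Set V)
                    · exact ⟨hzK, fun h => (hirr w) ((Set.mem_singleton_iff.mp h) ▸ hz)⟩
                    · exfalso
                      by_cases hzu : z = u
                      · exact hwnu (by subst hzu; exact hz.symm)
                      · have : z ∈ (F \ {u}) ∩ G.neighborSet w := ⟨⟨hzK, hzu⟩, hz⟩
                        rw [hwE] at this
                        exact this
                  have hcard : ((K : Set V) \ {w}).ncard = 4 := by
                    rw [Set.ncard_diff (by simpa using hwK) (Set.toFinite _), hKsetcard,
                      Set.ncard_singleton, hK5']
                  have := Set.ncard_le_ncard hsub (Set.toFinite _)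
                  have := hdeg w
                  omega
                have hf0ex : (F ∩ G.neighborSet u).Nonempty := by
                  have h4 : ((K : Set V) ∩ G.neighborSet u).ncard ≤ 4 := by
                    have := hKout u huK
                    omega
                  have := ncard_compl_inter (hdeg u) h4
                  rw [← hF_def] at this
                  rcases Set.eq_empty_or_nonempty (F ∩ G.neighborSet u) with hemp | hne
                  · rw [hemp] at this
                    simp [Set.ncard_empty] at this
                  · exact hne
                obtain ⟨f0, hf0⟩ := hf0ex
                have hf0u : f0 ≠ u := by
                  rintro rfl
                  exact hirr f0 hf0.2
                have hpoor3 : ∀ p1 p2 p3 : V, p1 ∈ poor → p2 ∈ poor → p3 ∈ poor →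
                    p1 ≠ p2 → p1 ≠ p3 → p2 ≠ p3 → False := by
                  intro p1 p2 p3 hp1 hp2 hp3 h12 h13 h23
                  set S : Set V := F \ {u} with hS_def
                  have hf0S : f0 ∈ S := ⟨hf0.1, hf0u⟩
                  have hSmin : ∀ f ∈ S, 2 ≤ (S ∩ G.neighborSet f).ncard := by
                    intro f hf
                    have hsubc : Sᶜ ∩ G.neighborSet f ⊆
                        insert u ((K : Set V) \ ({p1, p2, p3} : Set V)) := by
                      rintro z ⟨hzS, hzN⟩
                      simp only [hS_def, Set.mem_compl_iff, Set.mem_diff, not_and,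
                        Set.mem_singleton_iff, not_not] at hzS
                      by_cases hzF : z ∈ F
                      · exact Or.inl (hzS hzF)
                      · refine Or.inr ⟨by simpa [hF_def] using hzF, ?_⟩
                        simp only [Set.mem_insert_iff, Set.mem_singleton_iff, not_or]
                        refine ⟨?_, ?_, ?_⟩
                        · rintro rfl
                          have : f ∈ (F \ {u}) ∩ G.neighborSet z := ⟨hf, hzN.symm⟩
                          rw [hp1.2] at this
                          exact this
                        · rintro rfl
                          have : f ∈ (F \ {u}) ∩ G.neighborSet z := ⟨hf, hzN.symm⟩
                          rw [hp2.2] at this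
                          exact this
                        · rintro rfl
                          have : f ∈ (F \ {u}) ∩ G.neighborSet z := ⟨hf, hzN.symm⟩
                          rw [hp3.2] at this
                          exact this
                    have hsubppp : ({p1, p2, p3} : Set V) ⊆ (K : Set V) := by
                      rintro z hz
                      rcases hz with rfl | rfl | rfl
                      · exact hp1.1
                      · exact hp2.1
                      · exact hp3.1
                    have hppp : ({p1, p2, p3} : Set V).ncard = 3 := by
                      rw [Set.ncard_insert_of_notMem (by simp [h12, h13]) (Set.toFinite _),
                        Set.ncard_pair h23]
                    have hKd : ((K : Set V) \ ({p1, p2, p3} : Set V)).ncard = 2 := by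
                      rw [Set.ncard_diff hsubppp (Set.toFinite _), hKsetcard, hppp, hK5']
                    have hc3 : (Sᶜ ∩ G.neighborSet f).ncard ≤ 3 := by
                      refine le_trans (Set.ncard_le_ncard hsubc (Set.toFinite _)) ?_
                      refine le_trans (Set.ncard_insert_le _ _) ?_
                      omega
                    have := ncard_compl_inter (hdeg f) hc3
                    rw [compl_compl] at this
                    omega
                  have hSfam : S ∈ fam := ⟨Set.diff_subset, hSmin⟩
                  have : f0 ∈ A := Set.subset_sUnion_of_mem hSfam hf0S
                  rw [hAempty] at this
                  exact this
                by_cases hpp : ∃ p q : V, p ∈ poor ∧ q ∈ poor ∧ p ≠ q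
                · obtain ⟨p, q, hp, hq, hpq⟩ := hpp
                  refine ⟨p, q, hpoorX hp, hpoorX hq, hpq, ?_⟩
                  intro w hwK hwp hwq
                  refine hwb p q w (hpoorX hp) (hpoorX hq) hpq hwK hwp hwq (Or.inl ?_)
                  intro hwpoor
                  exact hpoor3 p q w hp hq hwpoor hpq (Ne.symm hwp) (Ne.symm hwq)
                · push_neg at hpp
                  by_cases hp1 : ∃ p, p ∈ poor
                  · obtain ⟨p, hp⟩ := hp1
                    obtain ⟨b, hbX, hbp⟩ := Set.exists_ne_of_one_lt_ncard hX2 p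
                    refine ⟨p, b, hpoorX hp, hbX, Ne.symm hbp, ?_⟩
                    intro w hwK hwp hwb'
                    refine hwb p b w (hpoorX hp) hbX (Ne.symm hbp) hwK hwp hwb' (Or.inl ?_)
                    intro hwpoor
                    exact hwp (hpp w p hwpoor hp)
                  · push_neg at hp1
                    obtain ⟨a, haX, b, hbX, hab⟩ := (Set.one_lt_ncard (Set.toFinite _)).mp hX2
                    refine ⟨a, b, haX, hbX, hab, ?_⟩
                    intro w hwK hwa hwb'
                    exact hwb a b w haX hbX hab hwK hwa hwb' (Or.inl (hp1 w))
              · obtain ⟨a, haX, b, hbX, hab⟩ := (Set.one_lt_ncard (Set.toFinite _)).mp hX2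
                exact ⟨a, b, haX, hbX, hab, fun w hwK hwa hwb' =>
                  hwb a b w haX hbX hab hwK hwa hwb' (Or.inr h6)⟩
            obtain ⟨a, b, haX, hbX, hab, hgood⟩ := hchoice
            have hua : G.Adj u a := haX.2
            have hub : G.Adj u b := hbX.2
            have hadjab : G.Adj a b := hKadj a (by simpa using hXsub haX) b
              (by simpa using hXsub hbX) hab
            refine mk_part (V1 := ({u, a, b} : Set V)) ⟨u, by simp⟩ (hcompl3 _ _ _) ?_ ?_
            · intro v hv
              rcases hv with h | h | h
              · subst h
                exact two_le_ncard_of (a := a) (b := b) ⟨by simp, hua⟩ ⟨by simp, hub⟩ hab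
              · subst h
                exact two_le_ncard_of (a := u) (b := b) ⟨by simp, hua.symm⟩ ⟨by simp, hadjab⟩
                  (G.ne_of_adj hub)
              · subst h
                exact two_le_ncard_of (a := u) (b := a) ⟨by simp, hub.symm⟩ ⟨by simp, hadjab.symm⟩
                  (G.ne_of_adj hua)
            · intro v hv
              simp only [Set.mem_compl_iff, Set.mem_insert_iff, Set.mem_singleton_iff,
                not_or] at hv
              obtain ⟨hvu, hva, hvb⟩ := hv
              by_cases hvK : v ∈ (K : Set V)
              · exact hgood v hvK hva hvb
              · by_cases hvNu : v ∈ G.neighborSet u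
                · have hnb1 : ¬ G.Adj v a := hcase1 v ⟨hvK, hvNu⟩ a haX
                  have hnb2 : ¬ G.Adj v b := hcase1 v ⟨hvK, hvNu⟩ b hbX
                  have hsub : ({u, a, b} : Set V) ∩ G.neighborSet v ⊆ {u} := by
                    rintro z ⟨hz1, hz2⟩
                    rcases hz1 with h | h | h
                    · simp [h]
                    · exfalso
                      rw [h] at hz2
                      exact hnb1 hz2
                    · exfalso
                      rw [h] at hz2
                      exact hnb2 hz2
                  have h1 : (({u, a, b} : Set V) ∩ G.neighborSet v).ncard ≤ 1 :=
                    ncard_le_one_of_subset_singleton hsub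
                  have := ncard_compl_inter (hdeg v) h1
                  omega
                · have hsub : ({u, a, b} : Set V) ∩ G.neighborSet v ⊆ {a, b} := by
                    rintro z ⟨hz1, hz2⟩
                    rcases hz1 with h | h | h
                    · exfalso
                      rw [h] at hz2
                      exact hvNu hz2.symm
                    · rw [h]
                      exact Set.mem_insert _ _
                    · rw [h]
                      exact Set.mem_insert_of_mem _ rfl
                  have h2 : (({u, a, b} : Set V) ∩ G.neighborSet v).ncard ≤ 2 :=
                    ncard_le_two_of_subset_pair hsub
                  have := ncard_compl_inter (hdeg v) h2
                  omega
        · -- F empty: G is complete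
          have hKuniv : (K : Set V) = Set.univ := by
            rw [← Set.compl_empty_iff, ← hF_def]
            exact Set.not_nonempty_iff_eq_empty.mp hF
          have hall : ∀ x y : V, x ≠ y → G.Adj x y := by
            intro x y hxy
            exact hKclique (by rw [hKuniv]; trivial) (by rw [hKuniv]; trivial) hxy
          obtain ⟨p1, hp1, p2, hp2, hp12⟩ := Finset.one_lt_card.mp
            (by rw [Finset.card_univ]; omega : 1 < (Finset.univ : Finset V).card)
          have hcard2 : 2 < ((Finset.univ : Finset V).erase p1).card := by
            rw [Finset.card_erase_of_mem hp1, Finset.card_univ]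
            omega
          have : 0 < (((Finset.univ : Finset V).erase p1).erase p2).card := by
            have := Finset.card_erase_of_mem (a := p2)
              (s := (Finset.univ : Finset V).erase p1)
              (by exact Finset.mem_erase.mpr ⟨Ne.symm hp12, hp2⟩)
            omega
          obtain ⟨p3, hp3⟩ := Finset.card_pos.mp this
          have hp31 : p3 ≠ p1 := Finset.ne_of_mem_erase (Finset.mem_of_mem_erase hp3)
          have hp32 : p3 ≠ p2 := Finset.ne_of_mem_erase hp3
          refine mk_part (V1 := ({p1, p2, p3} : Set V)) ⟨p1, by simp⟩ (hcompl3 _ _ _) ?_ ?_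
          · intro v hv
            rcases hv with rfl | rfl | rfl
            · exact two_le_ncard_of (a := p2) (b := p3) ⟨by simp, hall _ _ hp12⟩
                ⟨by simp, hall _ _ (Ne.symm hp31)⟩ (Ne.symm hp32)
            · exact two_le_ncard_of (a := p1) (b := p3) ⟨by simp, hall _ _ (Ne.symm hp12)⟩
                ⟨by simp, hall _ _ (Ne.symm hp32)⟩ (Ne.symm hp31)
            · exact two_le_ncard_of (a := p1) (b := p2) ⟨by simp, hall _ _ hp31⟩
                ⟨by simp, hall _ _ hp32⟩ hp12
          · intro v hv
            have hsub : ({p1, p2, p3} : Set V)ᶜ \ {v} ⊆ ({p1, p2, p3} : Set V)ᶜ ∩ G.neighborSet v := by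
              rintro z ⟨hz1, hz2⟩
              simp only [Set.mem_singleton_iff] at hz2
              exact ⟨hz1, hall v z (Ne.symm hz2)⟩
            have hc1 : ({p1, p2, p3} : Set V).ncard ≤ 3 := ncard_triple_le
            have hc2 : (({p1, p2, p3} : Set V)ᶜ).ncard = Fintype.card V - ({p1, p2, p3} : Set V).ncard := by
              have : (({p1, p2, p3} : Set V)ᶜ) = Set.univ \ ({p1, p2, p3} : Set V) := by
                ext z; simp
              rw [this, Set.ncard_diff (Set.subset_univ _) (Set.toFinite _), Set.ncard_univ,
                Nat.card_eq_fintype_card]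
            have hc3 : (({p1, p2, p3} : Set V)ᶜ \ {v}).ncard ≥ (({p1, p2, p3} : Set V)ᶜ).ncard - 1 := by
              have := Set.ncard_diff_singleton_le (({p1, p2, p3} : Set V)ᶜ) v
              have h' : ((({p1, p2, p3} : Set V)ᶜ) \ {v}).ncard ≥
                  (({p1, p2, p3} : Set V)ᶜ).ncard - ({v} : Set V).ncard := by
                have hsub2 : (({p1, p2, p3} : Set V)ᶜ) \ {v} ⊆ (({p1, p2, p3} : Set V)ᶜ) := Set.diff_subset
                have := Set.ncard_diff_add_ncard_of_subset
                  (Set.inter_subset_right : (({p1, p2, p3} : Set V)ᶜ) ∩ {v} ⊆ {v})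
                have hd : ((({p1, p2, p3} : Set V)ᶜ) \ {v}).ncard + ({v} : Set V).ncard ≥
                    (({p1, p2, p3} : Set V)ᶜ).ncard := by
                  have hun : (({p1, p2, p3} : Set V)ᶜ) ⊆ ((({p1, p2, p3} : Set V)ᶜ) \ {v}) ∪ {v} := by
                    intro z hz
                    by_cases hzv : z ∈ ({v} : Set V)
                    · exact Or.inr hzv
                    · exact Or.inl ⟨hz, hzv⟩
                  calc (({p1, p2, p3} : Set V)ᶜ).ncard
                      ≤ (((({p1, p2, p3} : Set V)ᶜ) \ {v}) ∪ {v}).ncard :=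
                        Set.ncard_le_ncard hun (Set.toFinite _)
                    _ ≤ _ := Set.ncard_union_le _ _
                simpa [Set.ncard_singleton] using hd
              simpa [Set.ncard_singleton] using h'
            have := Set.ncard_le_ncard hsub (Set.toFinite _)
            omega
  · by_cases hc4 : ∃ a b c d : V, a ≠ c ∧ b ≠ d ∧ G.Adj a b ∧ G.Adj b c ∧ G.Adj c d ∧ G.Adj d a
    · -- triangle-free with a 4-cycle
      push_neg at htri
      obtain ⟨a, b, c, d, hac, hbd, hab, hbc, hcd, hda⟩ := hc4
      have hcompl4 : (({a, b, c, d} : Set V)ᶜ).Nonempty := by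
        refine compl_nonempty_of_ncard_lt (lt_of_le_of_lt ?_ (by omega : 4 < Fintype.card V))
        refine le_trans (Set.ncard_insert_le _ _) ?_
        have := ncard_triple_le (a := b) (b := c) (c := d) (V := V)
        omega
      refine mk_part (V1 := ({a, b, c, d} : Set V)) ⟨a, by simp⟩ hcompl4 ?_ ?_
      · intro v hv
        rcases hv with h | h | h | h
        · subst h
          exact two_le_ncard_of (a := b) (b := d) ⟨by simp, hab⟩ ⟨by simp, hda.symm⟩ hbd
        · subst h
          exact two_le_ncard_of (a := a) (b := c) ⟨by simp, hab.symm⟩ ⟨by simp, hbc⟩ hac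
        · subst h
          exact two_le_ncard_of (a := b) (b := d) ⟨by simp, hbc.symm⟩ ⟨by simp, hcd⟩ hbd
        · subst h
          exact two_le_ncard_of (a := a) (b := c) ⟨by simp, hda⟩ ⟨by simp, hcd.symm⟩ hac
      · intro v hv
        have hsub : ∃ p q : V, ({a, b, c, d} : Set V) ∩ G.neighborSet v ⊆ {p, q} := by
          by_cases hva : G.Adj v a
          · refine ⟨a, c, ?_⟩
            rintro z ⟨hz1, hz2⟩
            rcases hz1 with h | h | h | h
            · simp [h]
            · exfalso
              rw [h] at hz2
              exact htri v a b hva hz2 hab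
            · simp [h]
            · exfalso
              rw [h] at hz2
              exact htri v d a hz2 hva hda
          · by_cases hvb : G.Adj v b
            · refine ⟨b, d, ?_⟩
              rintro z ⟨hz1, hz2⟩
              rcases hz1 with h | h | h | h
              · exfalso
                rw [h] at hz2
                exact hva hz2
              · simp [h]
              · exfalso
                rw [h] at hz2
                exact htri v b c hvb hz2 hbc
              · simp [h]
            · refine ⟨c, d, ?_⟩
              rintro z ⟨hz1, hz2⟩
              rcases hz1 with h | h | h | h
              · exfalso
                rw [h] at hz2
                exact hva hz2
              · exfalso
                rw [h] at hz2
                exact hvb hz2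
              · simp [h]
              · simp [h]
        obtain ⟨p, q, hpq⟩ := hsub
        have h2 : (({a, b, c, d} : Set V) ∩ G.neighborSet v).ncard ≤ 2 :=
          ncard_le_two_of_subset_pair hpq
        have := ncard_compl_inter (hdeg v) h2
        omega
    · -- girth at least 5
      push_neg at htri hc4
      have hnacyc : ¬ G.IsAcyclic :=
        not_acyclic_of_min_degree (fun v => by have := hdeg v; omega)
      obtain ⟨v0, c, hcyc, hge⟩ := SimpleGraph.exists_egirth_eq_length.mpr hnacyc
      have hminlen : ∀ (a : V) (w : G.Walk a a), w.IsCycle → c.length ≤ w.length := by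
        intro a w hw
        have h1 : G.egirth ≤ w.length := SimpleGraph.le_egirth.mp (le_refl G.egirth) a w hw
        rw [hge] at h1
        exact_mod_cast h1
      have hg3 : 3 ≤ c.length := hcyc.three_le_length
      have hsmall : ∀ (a : V) (q : G.Walk a a), q.IsCycle → q.length < 5 → False := by
        intro a q hq hlt
        have h3 := hq.three_le_length
        cases q with
        | nil => simp at h3
        | cons h1 q1 =>
          rename_i w1
          cases q1 with
          | nil => simp at h3
          | cons h2 q2 =>
            rename_i w2
            cases q2 with
            | nil => simp at h3
            | cons h3' q3 =>
              rename_i w3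
              simp only [Walk.length_cons] at hlt h3
              rcases Nat.lt_or_ge q3.length 1 with hq0 | hq1
              · -- triangle
                have hw3 : w3 = a := length_zero_eq (p := q3) (by omega)
                subst w3
                exact htri w1 w2 a h2 h1.symm h3'
              · -- 4-cycle
                have hq3len : q3.length = 1 := by omega
                cases q3 with
                | nil => simp at hq3len
                | cons h4 q4 =>
                  rename_i w4
                  simp only [Walk.length_cons] at hq3len
                  have hq40 : q4.length = 0 := by omega
                  have hw4 : w4 = a := length_zero_eq hq40
                  subst w4
                  have hq4nil : q4 = Walk.nil := Walk.nil_iff_eq_nil.mp (Walk.length_eq_zero_iff.mp hq40)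
                  subst hq4nil
                  have hnodup := hq.support_nodup
                  simp only [Walk.support_cons, Walk.support_nil, List.tail_cons,
                    List.nodup_cons, List.mem_cons, List.mem_singleton,
                    List.not_mem_nil, or_false, not_or] at hnodup
                  exact hc4 a w1 w2 w3 (fun h => hnodup.2.1.2 h.symm) hnodup.1.2.1
                    h1 h2 h3' h4
      have hg5 : 5 ≤ c.length := by
        by_contra hcon
        push_neg at hcon
        exact hsmall v0 c hcyc hcon
      set A : Set V := {z | z ∈ c.support} with hA_def
      have hnotnil : ¬ c.Nil := by
        rw [Walk.nil_iff_length_eq]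
        omega
      have hv0A : v0 ∈ A := Walk.start_mem_support c
      have hshort : ∀ (u s t : V) (q : G.Walk s t), q.IsPath → G.Adj u s → G.Adj t u →
          s ≠ t → u ∉ q.support → q.length + 2 < c.length → False := by
        intro u s t q hq hus htu hst hu hlen
        obtain ⟨w, hw, hwl⟩ := cycle_of_path hus htu hst q hq hu
        have := hminlen u w hw
        omega
      have hmin1 : ∀ x ∈ A, 2 ≤ (A ∩ G.neighborSet x).ncard := by
        intro x hxA
        have hxc : x ∈ c.support := hxA
        have hc' : (c.rotate x hxc).IsCycle := hcyc.rotate hxc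
        have hlen' : (c.rotate x hxc).length = c.length := rotate_length_eq c hxc
        have hmem' : ∀ z, z ∈ (c.rotate x hxc).support ↔ z ∈ c.support :=
          fun z => mem_rotate_support c hxc hnotnil
        cases hcc : c.rotate x hxc with
        | nil =>
          rw [hcc] at hlen'
          simp at hlen'
          omega
        | cons h1 p =>
          rename_i b1
          rw [hcc] at hc' hlen' hmem'
          have hb1A : b1 ∈ A := by
            apply (hmem' b1).mp
            rw [Walk.support_cons]
            exact List.mem_cons_of_mem _ (Walk.start_mem_support p)
          cases hpr : p.reverse with
          | nil =>
            exfalso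
            have := congrArg Walk.length hpr
            rw [Walk.length_reverse] at this
            simp only [Walk.length_nil] at this
            simp only [Walk.length_cons] at hlen'
            omega
          | cons h2 p2 =>
            rename_i b2
            have hb2A : b2 ∈ A := by
              apply (hmem' b2).mp
              rw [Walk.support_cons]
              refine List.mem_cons_of_mem _ ?_
              have hb2r : b2 ∈ p.reverse.support := by
                rw [hpr, Walk.support_cons]
                exact List.mem_cons_of_mem _ (Walk.start_mem_support p2)
              rw [Walk.support_reverse] at hb2r
              exact List.mem_reverse.mp hb2r
            have hb12 : b1 ≠ b2 := by
              intro heq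
              subst heq
              have hnd := hc'.isCircuit.isTrail.edges_nodup
              rw [Walk.edges_cons] at hnd
              have hfst : s(x, b1) ∈ p.edges := by
                have hmm : s(x, b1) ∈ p.reverse.edges := by
                  rw [hpr, Walk.edges_cons]
                  exact List.mem_cons_self
                rwa [Walk.edges_reverse, List.mem_reverse] at hmm
              exact (List.nodup_cons.mp hnd).1 hfst
            exact two_le_ncard_of ⟨hb1A, h1⟩ ⟨hb2A, h2⟩ hb12
      have hAc : Aᶜ.Nonempty := by
        by_contra hcon
        rw [Set.not_nonempty_iff_eq_empty, Set.compl_empty_iff] at hcon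
        have hv0c : v0 ∈ c.support := Walk.start_mem_support c
        have hc' : (c.rotate v0 hv0c).IsCycle := hcyc.rotate hv0c
        have hlen' : (c.rotate v0 hv0c).length = c.length := rotate_length_eq c hv0c
        have hmem' : ∀ z, z ∈ (c.rotate v0 hv0c).support ↔ z ∈ c.support :=
          fun z => mem_rotate_support c hv0c hnotnil
        cases hcc : c.rotate v0 hv0c with
        | nil =>
          rw [hcc] at hlen'
          simp at hlen'
          omega
        | cons h1 p =>
          rename_i b1
          rw [hcc] at hc' hlen' hmem'
          obtain ⟨hppath, hpedge⟩ := (Walk.cons_isCycle_iff p h1).mp hc'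
          simp only [Walk.length_cons] at hlen'
          cases hpr : p.reverse with
          | nil =>
            exfalso
            have := congrArg Walk.length hpr
            rw [Walk.length_reverse] at this
            simp only [Walk.length_nil] at this
            omega
          | cons h2 p2 =>
            rename_i b2
            have hnotsub : ¬ (G.neighborSet v0 ⊆ {v0, b1, b2}) := by
              intro hsub
              have h1' := Set.ncard_le_ncard hsub (Set.toFinite _)
              have h2' := ncard_triple_le (a := v0) (b := b1) (c := b2) (V := V)
              have := hdeg v0
              omega
            obtain ⟨w, hwN, hwt⟩ := Set.not_subset.mp hnotsub
            simp only [Set.mem_insert_iff, Set.mem_singleton_iff, not_or] at hwt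
            obtain ⟨hwv0, hwb1, hwb2⟩ := hwt
            have hwA : w ∈ A := by
              rw [hcon]
              trivial
            have hwp : w ∈ p.support := by
              have hw1 : w ∈ (Walk.cons h1 p).support := (hmem' w).mpr hwA
              rw [Walk.support_cons] at hw1
              rcases List.mem_cons.mp hw1 with heq | hmem0
              · exact absurd heq hwv0
              · exact hmem0
            have htq : (p.takeUntil w hwp).IsPath := hppath.takeUntil hwp
            have hlens : (p.takeUntil w hwp).length + (p.dropUntil w hwp).length = p.length :=
              takeUntil_length_add p hwp
            have hd0 : (p.dropUntil w hwp).length ≠ 0 := fun h => hwv0 (length_zero_eq h)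
            have hd1 : (p.dropUntil w hwp).length ≠ 1 := by
              intro hone
              have hex : ∃ (hzz : G.Adj w v0), p.dropUntil w hwp = Walk.cons hzz Walk.nil := by
                cases hdq : p.dropUntil w hwp with
                | nil =>
                  rw [hdq] at hone
                  simp at hone
                | cons ha q =>
                  rename_i m
                  rw [hdq] at hone
                  simp only [Walk.length_cons] at hone
                  have hq0 : q.length = 0 := by omega
                  have hm : m = v0 := length_zero_eq hq0
                  subst hm
                  have hqnil : q = Walk.nil := Walk.nil_iff_eq_nil.mp (Walk.length_eq_zero_iff.mp hq0)
                  subst hqnil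
                  exact ⟨ha, rfl⟩
              obtain ⟨hzz, hdeq⟩ := hex
              have hps : p = (p.takeUntil w hwp).append (Walk.cons hzz Walk.nil) := by
                conv_lhs => rw [← p.take_spec hwp]
                rw [hdeq]
              have hprr : p.reverse = Walk.cons hzz.symm (p.takeUntil w hwp).reverse := by
                conv_lhs => rw [hps]
                rw [Walk.reverse_append]
                simp
              have hcc2 := hpr.symm.trans hprr
              injection hcc2 with hinj1 hinj2 hinj3
              exact hwb2 hinj2.symm
            have hv0t : v0 ∉ (p.takeUntil w hwp).support := by
              intro hmem0
              have hnd := hppath.support_nodup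
              have hsplit : p.support
                  = (p.takeUntil w hwp).support ++ (p.dropUntil w hwp).support.tail := by
                conv_lhs => rw [← p.take_spec hwp]
                exact Walk.support_append _ _
              rw [hsplit] at hnd
              have hv0d : v0 ∈ (p.dropUntil w hwp).support.tail :=
                end_mem_support_tail _ (by rw [Walk.nil_iff_length_eq]; exact hd0)
              exact (List.disjoint_of_nodup_append hnd) hmem0 hv0d
            exact hshort v0 b1 w (p.takeUntil w hwp) htq h1 hwN.symm (Ne.symm hwb1) hv0t
              (by omega)
      have hA2 : ∀ u, u ∈ Aᶜ → (A ∩ G.neighborSet u).ncard ≤ 2 := by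
        intro u huc
        by_contra hcon
        push_neg at hcon
        obtain ⟨x, y, z, hx, hy, hz, hxy, hxz, hyz⟩ := exists_triple_of_two_lt_ncard hcon
        have hxc : x ∈ c.support := hx.1
        have hc' : (c.rotate x hxc).IsCycle := hcyc.rotate hxc
        have hlen' : (c.rotate x hxc).length = c.length := rotate_length_eq c hxc
        have hmem' : ∀ w', w' ∈ (c.rotate x hxc).support ↔ w' ∈ c.support :=
          fun w' => mem_rotate_support c hxc hnotnil
        have huc' : u ∉ (c.rotate x hxc).support := fun hmem0 => huc ((hmem' u).mp hmem0)
        have hyc' : y ∈ (c.rotate x hxc).support := (hmem' y).mpr hy.1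
        have hzc' : z ∈ (c.rotate x hxc).support := (hmem' z).mpr hz.1
        have hpiece : ∀ (s t : V) (q : G.Walk s t), q.IsPath →
            (∀ m, m ∈ q.support → m ∈ (c.rotate x hxc).support) → G.Adj u s → G.Adj t u →
            s ≠ t → q.length + 2 < c.length → False := by
          intro s t q hq hsub hus htu hst hlen
          exact hshort u s t q hq hus htu hst (fun hu0 => huc' (hsub u hu0)) hlen
        have hyx : y ≠ x := Ne.symm hxy
        have hty : ((c.rotate x hxc).takeUntil y hyc').IsPath := cycle_path_takeUntil hc' hyc' hyx
        have hdy : ((c.rotate x hxc).dropUntil y hyc').IsPath := cycle_path_dropUntil hc' hyc' hyx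
        have hlensy : ((c.rotate x hxc).takeUntil y hyc').length
            + ((c.rotate x hxc).dropUntil y hyc').length = c.length := by
          have := takeUntil_length_add (c.rotate x hxc) hyc'
          rw [hlen'] at this
          exact this
        have hsplit : (c.rotate x hxc).support = ((c.rotate x hxc).takeUntil y hyc').support
            ++ ((c.rotate x hxc).dropUntil y hyc').support.tail := by
          conv_lhs => rw [← (c.rotate x hxc).take_spec hyc']
          exact Walk.support_append _ _
        have hzcases : z ∈ ((c.rotate x hxc).takeUntil y hyc').support
            ∨ z ∈ ((c.rotate x hxc).dropUntil y hyc').support := by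
          have hz2 : z ∈ ((c.rotate x hxc).takeUntil y hyc').support
              ++ ((c.rotate x hxc).dropUntil y hyc').support.tail := by
            rw [← hsplit]
            exact hzc'
          rcases List.mem_append.mp hz2 with h | h
          · exact Or.inl h
          · exact Or.inr (List.mem_of_mem_tail h)
        rcases hzcases with hzt | hzd
        · -- pieces x→z, z→y, y→x
          have hq1 : (((c.rotate x hxc).takeUntil y hyc').takeUntil z hzt).IsPath :=
            hty.takeUntil hzt
          have hq2 : (((c.rotate x hxc).takeUntil y hyc').dropUntil z hzt).IsPath :=
            hty.dropUntil hzt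
          have hsum1 : (((c.rotate x hxc).takeUntil y hyc').takeUntil z hzt).length
              + (((c.rotate x hxc).takeUntil y hyc').dropUntil z hzt).length
              = ((c.rotate x hxc).takeUntil y hyc').length :=
            takeUntil_length_add _ hzt
          have hl1 : 1 ≤ (((c.rotate x hxc).takeUntil y hyc').takeUntil z hzt).length :=
            Nat.one_le_iff_ne_zero.mpr (fun h => hxz (length_zero_eq h))
          have hl2 : 1 ≤ (((c.rotate x hxc).takeUntil y hyc').dropUntil z hzt).length :=
            Nat.one_le_iff_ne_zero.mpr (fun h => hyz (length_zero_eq h).symm)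
          have hl3 : 1 ≤ ((c.rotate x hxc).dropUntil y hyc').length :=
            Nat.one_le_iff_ne_zero.mpr (fun h => hyx (length_zero_eq h))
          have hchoose : (((c.rotate x hxc).takeUntil y hyc').takeUntil z hzt).length + 2 < c.length
              ∨ (((c.rotate x hxc).takeUntil y hyc').dropUntil z hzt).length + 2 < c.length
              ∨ ((c.rotate x hxc).dropUntil y hyc').length + 2 < c.length := by
            omega
          rcases hchoose with hc1 | hc1 | hc1
          · exact hpiece x z _ hq1
              (fun m hm => Walk.support_takeUntil_subset _ _
                (Walk.support_takeUntil_subset _ _ hm))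
              hx.2 hz.2.symm hxz hc1
          · exact hpiece z y _ hq2
              (fun m hm => Walk.support_takeUntil_subset _ _
                (Walk.support_dropUntil_subset _ _ hm))
              hz.2 hy.2.symm (Ne.symm hyz) hc1
          · exact hpiece y x _ hdy
              (fun m hm => Walk.support_dropUntil_subset _ _ hm)
              hy.2 hx.2.symm hyx hc1
        · -- pieces x→y, y→z, z→x
          have hq2 : (((c.rotate x hxc).dropUntil y hyc').takeUntil z hzd).IsPath :=
            hdy.takeUntil hzd
          have hq3 : (((c.rotate x hxc).dropUntil y hyc').dropUntil z hzd).IsPath :=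
            hdy.dropUntil hzd
          have hsum2 : (((c.rotate x hxc).dropUntil y hyc').takeUntil z hzd).length
              + (((c.rotate x hxc).dropUntil y hyc').dropUntil z hzd).length
              = ((c.rotate x hxc).dropUntil y hyc').length :=
            takeUntil_length_add _ hzd
          have hl1 : 1 ≤ ((c.rotate x hxc).takeUntil y hyc').length :=
            Nat.one_le_iff_ne_zero.mpr (fun h => hxy (length_zero_eq h))
          have hl2 : 1 ≤ (((c.rotate x hxc).dropUntil y hyc').takeUntil z hzd).length :=
            Nat.one_le_iff_ne_zero.mpr (fun h => hyz (length_zero_eq h))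
          have hl3 : 1 ≤ (((c.rotate x hxc).dropUntil y hyc').dropUntil z hzd).length :=
            Nat.one_le_iff_ne_zero.mpr (fun h => hxz (length_zero_eq h).symm)
          have hchoose : ((c.rotate x hxc).takeUntil y hyc').length + 2 < c.length
              ∨ (((c.rotate x hxc).dropUntil y hyc').takeUntil z hzd).length + 2 < c.length
              ∨ (((c.rotate x hxc).dropUntil y hyc').dropUntil z hzd).length + 2 < c.length := by
            omega
          rcases hchoose with hc1 | hc1 | hc1
          · exact hpiece x y _ hty
              (fun m hm => Walk.support_takeUntil_subset _ _ hm)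
              hx.2 hy.2.symm hxy hc1
          · exact hpiece y z _ hq2
              (fun m hm => Walk.support_dropUntil_subset _ _
                (Walk.support_takeUntil_subset _ _ hm))
              hy.2 hz.2.symm hyz hc1
          · exact hpiece z x _ hq3
              (fun m hm => Walk.support_dropUntil_subset _ _
                (Walk.support_dropUntil_subset _ _ hm))
              hz.2 hx.2.symm (fun h => hxz h.symm) hc1
      refine mk_part (V1 := A) ⟨v0, hv0A⟩ hAc hmin1 ?_
      intro u hu
      have := ncard_compl_inter (hdeg u) (hA2 u hu)
      omega
end

section
/- A finite simple graph G has a 2-partition (V1, V2) into two nonempty sets such that, for i = 1, 2, the induced subgraph G[Vi] is connected and contains a cycle, if and only if G contains two vertex-disjoint cycles and either G is connected or G has exactly two connected components, each of which contains a cycle. -/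
open SimpleGraph

section Aux
variable {V : Type*} {G : SimpleGraph V} {s : Set V}

/-- Lift a walk of `G` whose support lies in `s` to a walk of `G.induce s`. -/
def liftWalk : ∀ {u v : V} (p : G.Walk u v) (_ : ∀ x ∈ p.support, x ∈ s)
    (hu : u ∈ s) (hv : v ∈ s), (G.induce s).Walk ⟨u, hu⟩ ⟨v, hv⟩
  | _, _, .nil, _, _, _ => .nil
  | _, _, @SimpleGraph.Walk.cons _ _ _ b _ a p, h, hu, hv =>
      .cons (by exact a)
        (liftWalk p (fun x hx => h x (by simp [hx])) (h b (by simp)) hv)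

lemma liftWalk_map : ∀ {u v : V} (p : G.Walk u v) (h : ∀ x ∈ p.support, x ∈ s)
    (hu : u ∈ s) (hv : v ∈ s),
    (liftWalk p h hu hv).map (Embedding.induce s).toHom = p
  | _, _, .nil, _, _, _ => rfl
  | _, _, .cons a p, h, hu, hv => by
      exact congrArg (Walk.cons a) (liftWalk_map p _ _ hv)

lemma liftWalk_isCycle {u : V} (p : G.Walk u u) (hp : p.IsCycle)
    (h : ∀ x ∈ p.support, x ∈ s) (hu : u ∈ s) :
    (liftWalk p h hu hu).IsCycle := by
  have := (Walk.map_isCycle_iff_of_injective (p := liftWalk p h hu hu)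
    (f := (Embedding.induce (G := G) s).toHom) (Embedding.induce (G := G) s).injective)
  rw [liftWalk_map] at this
  exact this.mp hp

lemma reachable_of_mem_support : ∀ {u v x : V} (p : G.Walk u v), x ∈ p.support → G.Reachable u x
  | _, _, _, .nil, hx => by
      rw [Walk.support_nil, List.mem_singleton] at hx
      subst hx; exact Reachable.refl _
  | _, _, x, .cons a p, hx => by
      rcases List.mem_cons.mp hx with h | h
      · exact h ▸ Reachable.refl _
      · exact (a.reachable).trans (reachable_of_mem_support p h)

lemma connected_induce_supp (k : G.ConnectedComponent) : (G.induce k.supp).Connected := by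
  obtain ⟨v, rfl⟩ := k.exists_rep
  rw [connected_iff]
  refine ⟨fun ⟨a, ha⟩ ⟨b, hb⟩ => ?_, ⟨⟨v, rfl⟩⟩⟩
  change a ∈ (G.connectedComponentMk v).supp at ha
  change b ∈ (G.connectedComponentMk v).supp at hb
  rw [ConnectedComponent.mem_supp_iff] at ha hb
  obtain ⟨p⟩ := (ConnectedComponent.eq.mp (ha.trans hb.symm))
  have hsub : ∀ x ∈ p.support, x ∈ (G.connectedComponentMk v).supp := fun x hx => by
    rw [ConnectedComponent.mem_supp_iff]
    exact (ConnectedComponent.sound (reachable_of_mem_support p hx).symm).trans ha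
  exact ⟨liftWalk p hsub (by rwa [ConnectedComponent.mem_supp_iff]) _⟩

lemma exists_boundary {S : Set V} : ∀ {a b : V} (p : G.Walk a b), a ∉ S → b ∈ S →
    ∃ y z, G.Adj y z ∧ y ∉ S ∧ z ∈ S
  | _, _, .nil, ha, hb => absurd hb ha
  | _, _, .cons (v := w) a p, ha, hb => by
      by_cases hw : w ∈ S
      · exact ⟨_, _, a, ha, hw⟩
      · exact exists_boundary p hw hb

lemma induce_singleton_connected (y : V) : (G.induce {y}).Connected := by
  rw [connected_iff]
  exact ⟨fun a b => by rw [Subsingleton.elim a b], ⟨⟨y, rfl⟩⟩⟩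

end Aux

/-- A finite graph `G` has a 2-partition into two nonempty sets each inducing a connected
graph containing a cycle, if and only if `G` contains two vertex-disjoint cycles and
either `G` is connected or `G` has exactly two connected components, each of which
contains a cycle. -/
theorem partition_into_connected_nonacyclic_iff {V : Type*} [Fintype V]
    (G : SimpleGraph V) :
    (∃ V1 V2 : Set V, V1.Nonempty ∧ V2.Nonempty ∧ Disjoint V1 V2 ∧ V1 ∪ V2 = Set.univ ∧
      (G.induce V1).Connected ∧ (∃ a, ∃ c : (G.induce V1).Walk a a, c.IsCycle) ∧
      (G.induce V2).Connected ∧ (∃ a, ∃ c : (G.induce V2).Walk a a, c.IsCycle)) ↔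
    ((∃ (u v : V) (c1 : G.Walk u u) (c2 : G.Walk v v),
        c1.IsCycle ∧ c2.IsCycle ∧ ∀ w, w ∈ c1.support → w ∉ c2.support) ∧
      (G.Connected ∨
        ∃ k1 k2 : G.ConnectedComponent, k1 ≠ k2 ∧ (∀ k, k = k1 ∨ k = k2) ∧
          ∀ k : G.ConnectedComponent,
            ∃ (v : V) (w : G.Walk v v), w.IsCycle ∧ G.connectedComponentMk v = k)) := by
  constructor
  · rintro ⟨V1, V2, hne1, hne2, hdisj, hcover, hconn1, ⟨a1, c1, hc1⟩, hconn2, ⟨a2, c2, hc2⟩⟩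
    have hinj1 : Function.Injective (Embedding.induce (G := G) V1).toHom :=
      (Embedding.induce (G := G) V1).injective
    have hinj2 : Function.Injective (Embedding.induce (G := G) V2).toHom :=
      (Embedding.induce (G := G) V2).injective
    refine ⟨⟨a1.val, a2.val, c1.map (Embedding.induce (G := G) V1).toHom,
      c2.map (Embedding.induce (G := G) V2).toHom, hc1.map hinj1, hc2.map hinj2, ?_⟩, ?_⟩
    · intro w hw1 hw2
      replace hw1 : w ∈ c1.support.map (Embedding.induce (G := G) V1).toHom := by
        rw [← Walk.support_map]; exact hw1
      replace hw2 : w ∈ c2.support.map (Embedding.induce (G := G) V2).toHom := by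
        rw [← Walk.support_map]; exact hw2
      rw [List.mem_map] at hw1 hw2
      obtain ⟨x, -, rfl⟩ := hw1
      obtain ⟨y, -, hyx⟩ := hw2
      have hyx' : (y : V) = (x : V) := hyx
      exact Set.disjoint_left.mp hdisj x.2 (hyx' ▸ y.2)
    · have key1 : ∀ x ∈ V1, G.connectedComponentMk x = G.connectedComponentMk a1.val :=
        fun x hx => ConnectedComponent.sound
          ((hconn1 ⟨x, hx⟩ a1).map (Embedding.induce (G := G) V1).toHom)
      have key2 : ∀ x ∈ V2, G.connectedComponentMk x = G.connectedComponentMk a2.val :=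
        fun x hx => ConnectedComponent.sound
          ((hconn2 ⟨x, hx⟩ a2).map (Embedding.induce (G := G) V2).toHom)
      by_cases hk : G.connectedComponentMk a1.val = G.connectedComponentMk a2.val
      · left
        have hall : ∀ x : V, G.connectedComponentMk x = G.connectedComponentMk a1.val := by
          intro x
          rcases (hcover ▸ Set.mem_univ x : x ∈ V1 ∪ V2) with h | h
          · exact key1 x h
          · exact (key2 x h).trans hk.symm
        rw [connected_iff]
        exact ⟨fun x y => ConnectedComponent.exact ((hall x).trans (hall y).symm), ⟨a1.val⟩⟩
      · right
        refine ⟨_, _, hk, ?_, ?_⟩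
        · intro k
          obtain ⟨x, rfl⟩ := k.exists_rep
          rcases (hcover ▸ Set.mem_univ x : x ∈ V1 ∪ V2) with h | h
          · exact Or.inl (key1 x h)
          · exact Or.inr (key2 x h)
        · intro k
          rcases (by
            intro k
            obtain ⟨x, rfl⟩ := k.exists_rep
            rcases (hcover ▸ Set.mem_univ x : x ∈ V1 ∪ V2) with h | h
            · exact Or.inl (key1 x h)
            · exact Or.inr (key2 x h) :
              ∀ k : G.ConnectedComponent, k = G.connectedComponentMk a1.val ∨
                k = G.connectedComponentMk a2.val) k with rfl | rfl
          · exact ⟨a1.val, c1.map (Embedding.induce (G := G) V1).toHom, hc1.map hinj1, rfl⟩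
          · exact ⟨a2.val, c2.map (Embedding.induce (G := G) V2).toHom, hc2.map hinj2, rfl⟩
  · rintro ⟨⟨u, v, c1, c2, hc1, hc2, hdisj⟩, hconn | ⟨k1, k2, hne, hall, hcyc⟩⟩
    · classical
      set P : Finset V × Finset V → Prop := fun p =>
        (∀ x ∈ c1.support, x ∈ p.1) ∧ (∀ x ∈ c2.support, x ∈ p.2) ∧ Disjoint p.1 p.2 ∧
        (G.induce (↑p.1 : Set V)).Connected ∧ (G.induce (↑p.2 : Set V)).Connected with hPdef
      have hcoe1 : (↑c1.support.toFinset : Set V) = {x | x ∈ c1.support} := by ext x; simp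
      have hcoe2 : (↑c2.support.toFinset : Set V) = {x | x ∈ c2.support} := by ext x; simp
      have hP0 : P (c1.support.toFinset, c2.support.toFinset) := by
        refine ⟨fun x hx => List.mem_toFinset.mpr hx, fun x hx => List.mem_toFinset.mpr hx,
          Finset.disjoint_left.mpr fun x hx1 hx2 =>
            hdisj x (List.mem_toFinset.mp hx1) (List.mem_toFinset.mp hx2), ?_, ?_⟩
        · rw [hcoe1]; exact c1.connected_induce_support
        · rw [hcoe2]; exact c2.connected_induce_support
      obtain ⟨p, hpmem, hmax⟩ := Finset.exists_max_image
        (Finset.univ.filter P) (fun p => (p.1 ∪ p.2).card)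
        ⟨_, Finset.mem_filter.mpr ⟨Finset.mem_univ _, hP0⟩⟩
      have hP : P p := (Finset.mem_filter.mp hpmem).2
      obtain ⟨hs1, hs2, hdj, hcn1, hcn2⟩ := hP
      have huniv : (↑p.1 ∪ ↑p.2 : Set V) = Set.univ := by
        by_contra hne'
        obtain ⟨x, hx⟩ : ∃ x, x ∉ (↑p.1 ∪ ↑p.2 : Set V) := by
          by_contra h; push_neg at h; exact hne' (Set.eq_univ_of_forall h)
        obtain ⟨w⟩ := hconn.preconnected x u
        have hu : u ∈ (↑p.1 ∪ ↑p.2 : Set V) := Or.inl (hs1 u c1.start_mem_support)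
        obtain ⟨y, z, hadj, hy, hz⟩ := exists_boundary w hx hu
        have hy1 : y ∉ p.1 := fun h => hy (Or.inl h)
        have hy2 : y ∉ p.2 := fun h => hy (Or.inr h)
        rcases hz with hz | hz
        · have hP' : P (insert y p.1, p.2) := by
            refine ⟨fun a ha => Finset.mem_insert_of_mem (hs1 a ha), hs2,
              Finset.disjoint_left.mpr ?_, ?_, hcn2⟩
            · intro a ha
              rcases Finset.mem_insert.mp ha with rfl | ha
              · exact hy2
              · exact Finset.disjoint_left.mp hdj ha
            · have := connected_induce_union (G := G)
                (induce_singleton_connected y).preconnected hcn1.preconnected (Set.mem_singleton y) hz hadj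
              rwa [Finset.coe_insert, Set.insert_eq]
          have hle := hmax _ (Finset.mem_filter.mpr ⟨Finset.mem_univ _, hP'⟩)
          simp only [Finset.insert_union] at hle
          rw [Finset.card_insert_of_notMem (fun h => hy (by
            rcases Finset.mem_union.mp h with h | h
            · exact Or.inl h
            · exact Or.inr h))] at hle
          omega
        · have hP' : P (p.1, insert y p.2) := by
            refine ⟨hs1, fun a ha => Finset.mem_insert_of_mem (hs2 a ha),
              Finset.disjoint_right.mpr ?_, hcn1, ?_⟩
            · intro a ha
              rcases Finset.mem_insert.mp ha with rfl | ha
              · exact hy1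
              · exact Finset.disjoint_right.mp hdj ha
            · have := connected_induce_union (G := G)
                (induce_singleton_connected y).preconnected hcn2.preconnected (Set.mem_singleton y) hz hadj
              rwa [Finset.coe_insert, Set.insert_eq]
          have hle := hmax _ (Finset.mem_filter.mpr ⟨Finset.mem_univ _, hP'⟩)
          simp only [Finset.union_insert] at hle
          rw [Finset.card_insert_of_notMem (fun h => hy (by
            rcases Finset.mem_union.mp h with h | h
            · exact Or.inl h
            · exact Or.inr h))] at hle
          omega
      have hm1 : ∀ x ∈ c1.support, x ∈ (↑p.1 : Set V) := fun x hx => hs1 x hx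
      have hm2 : ∀ x ∈ c2.support, x ∈ (↑p.2 : Set V) := fun x hx => hs2 x hx
      refine ⟨↑p.1, ↑p.2, ⟨u, hm1 u c1.start_mem_support⟩, ⟨v, hm2 v c2.start_mem_support⟩,
        Finset.disjoint_coe.mpr hdj, huniv, hcn1,
        ⟨_, liftWalk c1 hm1 (hm1 u c1.start_mem_support) (hm1 u c1.start_mem_support),
          liftWalk_isCycle c1 hc1 hm1 _⟩, hcn2,
        ⟨_, liftWalk c2 hm2 (hm2 v c2.start_mem_support) (hm2 v c2.start_mem_support),
          liftWalk_isCycle c2 hc2 hm2 _⟩⟩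
    · obtain ⟨x1, w1, hw1, hk1⟩ := hcyc k1
      obtain ⟨x2, w2, hw2, hk2⟩ := hcyc k2
      have hsub1 : ∀ x ∈ w1.support, x ∈ k1.supp := fun x hx => by
        rw [ConnectedComponent.mem_supp_iff]
        exact (ConnectedComponent.sound (reachable_of_mem_support w1 hx).symm).trans hk1
      have hsub2 : ∀ x ∈ w2.support, x ∈ k2.supp := fun x hx => by
        rw [ConnectedComponent.mem_supp_iff]
        exact (ConnectedComponent.sound (reachable_of_mem_support w2 hx).symm).trans hk2
      refine ⟨k1.supp, k2.supp, ⟨x1, hk1⟩, ⟨x2, hk2⟩, ?_, ?_, connected_induce_supp k1,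
        ⟨_, liftWalk w1 hsub1 (hsub1 x1 w1.start_mem_support) (hsub1 x1 w1.start_mem_support),
          liftWalk_isCycle w1 hw1 hsub1 _⟩, connected_induce_supp k2,
        ⟨_, liftWalk w2 hsub2 (hsub2 x2 w2.start_mem_support) (hsub2 x2 w2.start_mem_support),
          liftWalk_isCycle w2 hw2 hsub2 _⟩⟩
      · rw [Set.disjoint_left]
        intro a ha1 ha2
        rw [ConnectedComponent.mem_supp_iff] at ha1 ha2
        exact hne (ha1.symm.trans ha2)
      · ext a
        simp only [Set.mem_union, Set.mem_univ, iff_true, ConnectedComponent.mem_supp_iff]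
        exact hall (G.connectedComponentMk a)
end

section
/- Every 2-edge-connected finite simple graph G that is not a cycle has a 2-partition (V1, V2) into two nonempty sets such that the induced subgraph G[V1] is connected and the induced subgraph G[V2] is 2-edge-connected. -/
/-- A graph is 2-edge-connected if it has at least two vertices, is connected, and
remains connected after the deletion of any single edge. -/
def TwoEdgeConnected {W : Type*} (H : SimpleGraph W) : Prop :=
  2 ≤ Nat.card W ∧ H.Connected ∧ ∀ e ∈ H.edgeSet, (H.deleteEdges {e}).Connected

/-- A graph is a cycle if it is connected and every vertex has degree exactly 2. -/
def IsCycleGraph {W : Type*} (H : SimpleGraph W) : Prop :=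
  H.Connected ∧ ∀ v : W, (H.neighborSet v).ncard = 2

open SimpleGraph Walk


namespace TECAux

variable {V : Type*}

/-- Deleting edges and inducing commute (single edge inside the set). -/
lemma induce_deleteEdges_comm (G : SimpleGraph V) (S : Set V) (a b : ↑S) :
    (G.induce S).deleteEdges {s(a, b)} = (G.deleteEdges {s(a.1, b.1)}).induce S := by
  ext ⟨c, hc⟩ ⟨d, hd⟩
  simp only [deleteEdges_adj, comap_adj, Function.Embedding.coe_subtype,
    Set.mem_singleton_iff, Sym2.eq, Sym2.rel_iff', Prod.mk.injEq, Prod.swap_prod_mk]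
  constructor
  · rintro ⟨h1, h2⟩
    refine ⟨h1, ?_⟩
    rintro (⟨rfl, rfl⟩ | ⟨rfl, rfl⟩) <;> simp_all [Subtype.ext_iff]
  · rintro ⟨h1, h2⟩
    refine ⟨h1, ?_⟩
    rintro (⟨h3, h4⟩ | ⟨h3, h4⟩)
    · exact h2 (Or.inl ⟨congrArg Subtype.val h3, congrArg Subtype.val h4⟩)
    · exact h2 (Or.inr ⟨congrArg Subtype.val h3, congrArg Subtype.val h4⟩)

/-- Deleting an edge with an endpoint outside `S` does not change `G[S]`. -/
lemma deleteEdges_induce_of_not_mem (G : SimpleGraph V) {S : Set V} {x y : V} (hx : x ∉ S) :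
    (G.deleteEdges {s(x, y)}).induce S = G.induce S := by
  ext ⟨c, hc⟩ ⟨d, hd⟩
  simp only [comap_adj, Function.Embedding.coe_subtype, deleteEdges_adj, Set.mem_singleton_iff,
    Sym2.eq, Sym2.rel_iff', Prod.mk.injEq, Prod.swap_prod_mk]
  constructor
  · rintro ⟨h1, _⟩; exact h1
  · intro h1
    refine ⟨h1, ?_⟩
    rintro (⟨rfl, rfl⟩ | ⟨rfl, rfl⟩) <;> exact hx (by assumption)

end TECAux

namespace TECAux

variable {V : Type*}

/-- Walking from inside `A` to `T`, where edges leaving `A` can only go to `T`,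
one can reach `T` while staying inside `T ∪ A`. -/
lemma escape {G' : SimpleGraph V} {A T : Set V}
    (hA : ∀ p q, p ∈ A → q ∉ A → q ∉ T → ¬G'.Adj p q) :
    ∀ {v t : V}, ∀ _ : G'.Walk v t, v ∈ A → t ∈ T →
      ∃ w, w ∈ T ∧ ∃ r : G'.Walk v w, ∀ x ∈ r.support, x ∈ T ∪ A := by
  intro v t p
  induction p with
  | nil =>
    intro hv ht
    exact ⟨_, ht, Walk.nil, by simp; exact Or.inl ht⟩
  | @cons u c t h q ih =>
    intro hv ht
    by_cases hc : c ∈ T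
    · refine ⟨c, hc, Walk.cons h Walk.nil, ?_⟩
      intro x hx
      simp only [Walk.support_cons, Walk.support_nil, List.mem_cons, List.mem_singleton] at hx
      rcases hx with rfl | rfl | h'
      · exact Or.inr hv
      · exact Or.inl hc
      · cases h'
    · have hcA : c ∈ A := by
        by_contra hq
        exact hA u c hv hq hc h
      obtain ⟨w, hw, r, hr⟩ := ih hcA ht
      refine ⟨w, hw, Walk.cons h r, ?_⟩
      intro x hx
      rw [Walk.support_cons, List.mem_cons] at hx
      rcases hx with rfl | hx
      · exact Or.inr hv
      · exact hr x hx

lemma walk_reachable_induce {G' : SimpleGraph V} {U : Set V} {v w : V}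
    (r : G'.Walk v w) :
    ∀ (_ : ∀ x ∈ r.support, x ∈ U) (hv : v ∈ U) (hw : w ∈ U),
      (G'.induce U).Reachable ⟨v, hv⟩ ⟨w, hw⟩ := by
  induction r with
  | nil =>
    intro _ hv hw
    exact Reachable.refl _
  | @cons u c w h q ih =>
    intro hr hv hw
    have hc : c ∈ U := hr c (by simp)
    have step : (G'.induce U).Adj ⟨u, hv⟩ ⟨c, hc⟩ := h
    exact step.reachable.trans (ih (fun x hx => hr x (by simp [hx])) hc hw)

end TECAux

namespace TECAux

variable {V : Type*}

/-- The patching lemma: if `G'` is connected, `G'[S]` is connected, and all edges leaving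
`A` go to `S`, then `G'[S ∪ A]` is connected. -/
lemma patch {G' : SimpleGraph V} {S A : Set V} (hcon : G'.Connected)
    (hS : (G'.induce S).Connected)
    (hA : ∀ p q, p ∈ A → q ∉ A → q ∉ S → ¬G'.Adj p q) :
    (G'.induce (S ∪ A)).Connected := by
  obtain ⟨⟨s₀, hs₀⟩⟩ := hS.nonempty
  have key : ∀ u (hu : u ∈ S ∪ A), ∃ w, ∃ hw : w ∈ S,
      (G'.induce (S ∪ A)).Reachable ⟨u, hu⟩ ⟨w, Or.inl hw⟩ := by
    intro u hu
    by_cases huS : u ∈ S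
    · exact ⟨u, huS, Reachable.refl _⟩
    · have huA : u ∈ A := hu.resolve_left huS
      obtain ⟨p⟩ := hcon.preconnected u s₀
      obtain ⟨w, hw, r, hr⟩ := escape hA p huA hs₀
      exact ⟨w, hw, walk_reachable_induce r hr hu (Or.inl hw)⟩
  rw [connected_iff_exists_forall_reachable]
  refine ⟨⟨s₀, Or.inl hs₀⟩, ?_⟩
  rintro ⟨u, hu⟩
  obtain ⟨w, hw, hreach⟩ := key u hu
  have hreach2 : (G'.induce (S ∪ A)).Reachable ⟨s₀, Or.inl hs₀⟩ ⟨w, Or.inl hw⟩ := by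
    have := hS.preconnected ⟨s₀, hs₀⟩ ⟨w, hw⟩
    exact this.map (G'.induceHomOfLE Set.subset_union_left).toHom
  exact hreach2.trans hreach.symm

end TECAux

namespace TECAux

variable {V : Type*}

/-- If a walk avoids an edge `e`, then the graph induced (after deleting `e`) on its support
is connected. -/
lemma connected_induce_support_avoid {G : SimpleGraph V} {a b : V} (q : G.Walk a b)
    {e : Sym2 V} (he : e ∉ q.edges) :
    ((G.deleteEdges {e}).induce {v | v ∈ q.support}).Connected := by
  have hsub : ∀ f ∈ q.edges, f ∈ (G.deleteEdges {e}).edgeSet := by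
    intro f hf
    rw [edgeSet_deleteEdges]
    exact ⟨q.edges_subset_edgeSet hf, by
      simp only [Set.mem_singleton_iff]
      rintro rfl
      exact he hf⟩
  have := (q.transfer _ hsub).connected_induce_support
  rwa [Walk.support_transfer] at this

/-- In a path `q` ending at `b`, the only edge incident to `b` is the last one. -/
lemma path_last_edge {G : SimpleGraph V} {z b : V} (q : G.Walk z b) :
    ∀ (_ : q.IsPath) {e : Sym2 V} (_ : e ∈ q.edges) (_ : b ∈ e),
    ∃ (b' : V) (r : G.Walk z b') (h' : G.Adj b' b),
      q = r.concat h' ∧ e = s(b', b) ∧ e ∉ r.edges := by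
  induction q with
  | nil => intro _ e he; simp at he
  | @cons z c b h q' ih =>
    intro hq e he hb
    rw [Walk.cons_isPath_iff] at hq
    rw [Walk.edges_cons, List.mem_cons] at he
    rcases he with rfl | he
    · rw [Sym2.mem_iff] at hb
      rcases hb with rfl | rfl
      · exact absurd (q'.end_mem_support) (by exact hq.2)
      · have : q' = Walk.nil := (Walk.isPath_iff_eq_nil (p := q')).mp hq.1
        subst this
        exact ⟨z, Walk.nil, h, by rw [Walk.concat_nil], rfl, by simp⟩
    · obtain ⟨b', r', h'', heq, hee, her⟩ := ih hq.1 he hb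
      refine ⟨b', Walk.cons h r', h'', by rw [heq, Walk.concat_cons], hee, ?_⟩
      rw [Walk.edges_cons, List.mem_cons]
      rintro (hez | hez)
      · apply hq.2
        have : z ∈ e := by rw [hez]; exact Sym2.mem_mk_left z c
        rw [hee, Sym2.mem_iff] at this
        rcases this with rfl | rfl
        · exact Walk.fst_mem_support_of_mem_edges q' (by rwa [← hee])
        · exact Walk.snd_mem_support_of_mem_edges q' (by rwa [← hee])
      · exact her hez

end TECAux

namespace TECAux

variable {V : Type*}

/-- Deleting an edge of a cycle keeps the induced graph on its support connected. -/
lemma cycle_delete_edge_connected {G : SimpleGraph V} {x : V} {c : G.Walk x x}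
    (hc : c.IsCycle) {e : Sym2 V} (he : e ∈ c.edges) (hx : x ∈ e) :
    ((G.deleteEdges {e}).induce {v | v ∈ c.support}).Connected := by
  obtain ⟨z, h, q, hq⟩ := (Walk.not_nil_iff).mp hc.not_nil
  subst hq
  obtain ⟨hqpath, hfe⟩ := (Walk.cons_isCycle_iff q h).mp hc
  by_cases hfirst : e = s(x, z)
  · subst hfirst
    have hset : {v | v ∈ (Walk.cons h q).support} = {v | v ∈ q.support} := by
      ext y
      simp only [Set.mem_setOf_eq, Walk.support_cons, List.mem_cons]
      constructor
      · rintro (rfl | hy)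
        · exact q.end_mem_support
        · exact hy
      · exact Or.inr
    rw [hset]
    exact connected_induce_support_avoid q hfe
  · rw [Walk.edges_cons, List.mem_cons] at he
    rcases he with he | he
    · exact absurd he hfirst
    · obtain ⟨b', r, h', heq, hee, her⟩ := path_last_edge q hqpath he hx
      have hm : e ∉ (Walk.cons h r).edges := by
        rw [Walk.edges_cons, List.mem_cons]
        rintro (h1 | h1)
        · exact hfirst h1
        · exact her h1
      have hset : {v | v ∈ (Walk.cons h q).support} = {v | v ∈ (Walk.cons h r).support} := by
         subst heq
         ext y
         simp only [Set.mem_setOf_eq, Walk.support_cons, Walk.support_concat, List.mem_cons,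
           List.concat_eq_append, List.mem_append, List.mem_singleton]
         tauto
      rw [hset]
      exact connected_induce_support_avoid (Walk.cons h r) hm

end TECAux

namespace TECAux

variable {V : Type*}

/-- A minimum-length cycle has no chords: any edge of `G` between support vertices is a
cycle edge. -/
lemma chordfree {G : SimpleGraph V} {u : V} {c : G.Walk u u} (hc : c.IsCycle)
    (hmin : ∀ (a : V) (w : G.Walk a a), w.IsCycle → c.length ≤ w.length)
    {x y : V} (hx : x ∈ c.support) (hy : y ∈ c.support) (hadj : G.Adj x y) :
    s(x, y) ∈ c.edges := by
  classical
  by_contra hch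
  set c' := c.rotate x hx with hc'def
  have hc' : c'.IsCycle := hc.rotate hx
  have hlen : c'.length = c.length := by
    rw [hc'def, Walk.rotate, Walk.length_append, add_comm, ← Walk.length_append, Walk.take_spec]
  have hy'' : y ∈ c'.support := by
    rw [← Walk.mem_verts_toSubgraph, hc'def, Walk.toSubgraph_rotate, Walk.mem_verts_toSubgraph]
    exact hy
  have hchord' : s(x, y) ∉ c'.edges := fun hh => hch ((Walk.rotate_edges c x hx).mem_iff.mp hh)
  obtain ⟨z, h, q, hq⟩ := Walk.not_nil_iff.mp hc'.not_nil
  rw [hq] at hc' hy'' hchord' hlen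
  obtain ⟨hqpath, hfe⟩ := (Walk.cons_isCycle_iff q h).mp hc'
  rw [Walk.support_cons, List.mem_cons] at hy''
  have hyq : y ∈ q.support := hy''.resolve_left hadj.ne'
  rw [Walk.edges_cons, List.mem_cons] at hchord'
  push_neg at hchord'
  set q2 := q.dropUntil y hyq with hq2def
  have hq2path : q2.IsPath := hqpath.dropUntil hyq
  have hq2e : s(x, y) ∉ q2.edges := fun hh => hchord'.2 (Walk.edges_dropUntil_subset q hyq hh)
  have hd : (Walk.cons hadj q2).IsCycle := (Walk.cons_isCycle_iff q2 hadj).mpr ⟨hq2path, hq2e⟩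
  have hlen2 := hmin x (Walk.cons hadj q2) hd
  have hql : q.length = (q.takeUntil y hyq).length + q2.length := by
    conv_lhs => rw [← Walk.take_spec q hyq]
    rw [hq2def, Walk.length_append]
  have hz : (q.takeUntil y hyq).length = 0 := by
    rw [Walk.length_cons] at hlen hlen2
    omega
  have hzy : z = y := Walk.eq_of_length_eq_zero hz
  exact hchord'.1 (by rw [hzy])

end TECAux

namespace TECAux

variable {V : Type*}

/-- The two neighbors of the base point along a cycle. -/
lemma cycle_neighbors {G : SimpleGraph V} {x : V} {c : G.Walk x x} (hc : c.IsCycle) :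
    ∃ p₁ p₂ : V, p₁ ≠ p₂ ∧ ∀ w, (s(x, w) ∈ c.edges ↔ (w = p₁ ∨ w = p₂)) := by
  obtain ⟨z, h, q, hq⟩ := Walk.not_nil_iff.mp hc.not_nil
  subst hq
  obtain ⟨hqpath, hfe⟩ := (Walk.cons_isCycle_iff q h).mp hc
  have hqlen : 3 ≤ (Walk.cons h q).length := hc.three_le_length
  rw [Walk.length_cons] at hqlen
  have hrnotnil : ¬ q.reverse.Nil := by
    rw [Walk.nil_iff_length_eq, Walk.length_reverse]; omega
  obtain ⟨b', hb, r', hr⟩ := Walk.not_nil_iff.mp hrnotnil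
  have hqeq : q = r'.reverse.concat hb.symm := by
    rw [Walk.concat_eq_append, ← Walk.reverse_cons, ← hr, Walk.reverse_reverse]
    exact hb
  set r := r'.reverse with hrdef
  have hlast : s(b', x) ∈ q.edges := by
    rw [hqeq, Walk.edges_concat, List.concat_eq_append]
    simp [Sym2.eq_swap]
  refine ⟨z, b', ?_, ?_⟩
  · rintro rfl
    exact hfe (by rw [Sym2.eq_swap] at hlast; exact hlast)
  · intro w
    constructor
    · intro hw
      rw [Walk.edges_cons, List.mem_cons] at hw
      rcases hw with hw | hw
      · rw [Sym2.eq_iff] at hw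
        left
        rcases hw with ⟨-, h2⟩ | ⟨h1, h2⟩
        · exact h2
        · exact absurd h1 h.ne
      · rw [hqeq, Walk.edges_concat, List.concat_eq_append, List.mem_append] at hw
        rcases hw with hw | hw
        · exfalso
          have hxr : x ∈ r.support := Walk.fst_mem_support_of_mem_edges r hw
          have hsup : q.support = r.support.concat x := by
            rw [hqeq, Walk.support_concat, List.concat_eq_append]
          have hnd := hqpath.support_nodup
          rw [hsup, List.concat_eq_append, List.nodup_append] at hnd
          exact hnd.2.2 x hxr x (by simp) rfl
        · right
          rw [List.mem_singleton, Sym2.eq_iff] at hw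
          rcases hw with ⟨h1, -⟩ | ⟨-, h2⟩
          · exact absurd h1 hb.ne
          · exact h2
    · rintro (rfl | rfl)
      · rw [Walk.edges_cons]; exact List.mem_cons_self
      · rw [Walk.edges_cons]
        apply List.mem_cons_of_mem
        rw [Sym2.eq_swap]
        exact hlast

end TECAux


namespace TECAux

variable {V : Type*}

/-- The key property of the second part of the partition. -/
def Good (G : SimpleGraph V) (S : Set V) : Prop :=
  2 ≤ S.ncard ∧ (G.induce S).Connected ∧
    ∀ x y : V, x ∈ S → y ∈ S → G.Adj x y → ((G.deleteEdges {s(x, y)}).induce S).Connected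

lemma good_twoEdgeConnected {G : SimpleGraph V} {S : Set V} (h : Good G S) :
    TwoEdgeConnected (G.induce S) := by
  refine ⟨?_, h.2.1, ?_⟩
  · rw [Nat.card_coe_set_eq]; exact h.1
  · intro e he
    induction e using Sym2.ind with
    | _ a b =>
      rw [SimpleGraph.mem_edgeSet] at he
      have hadj : G.Adj a.1 b.1 := he
      rw [induce_deleteEdges_comm]
      exact h.2.2 a.1 b.1 a.2 b.2 hadj

lemma exists_cycle [Finite V] {G : SimpleGraph V} (h2 : 2 ≤ Nat.card V) (hconn : G.Connected)
    (hdel : ∀ e ∈ G.edgeSet, (G.deleteEdges {e}).Connected) :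
    ∃ (u : V) (c : G.Walk u u), c.IsCycle := by
  have : Nontrivial V := Finite.one_lt_card_iff_nontrivial.mp (by omega)
  obtain ⟨x, y, hxy⟩ := exists_pair_ne V
  obtain ⟨p⟩ := hconn.preconnected x y
  have hnp : ¬ p.Nil := by
    intro hn
    rw [Walk.nil_iff_length_eq] at hn
    exact hxy (Walk.eq_of_length_eq_zero hn)
  obtain ⟨z, hadj, q, -⟩ := Walk.not_nil_iff.mp hnp
  have he : s(x, z) ∈ G.edgeSet := by rwa [SimpleGraph.mem_edgeSet]
  have hrd : (G.deleteEdges {s(x, z)}).Reachable x z := (hdel _ he).preconnected x z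
  have hrfl : G.deleteEdges {s(x, z)} = G \ fromEdgeSet {s(x, z)} := rfl
  obtain ⟨u, c, hc, -⟩ := (adj_and_reachable_delete_edges_iff_exists_cycle).mp
    ⟨hadj, by exact hrd⟩
  exact ⟨u, c, hc⟩

end TECAux

/-- Every 2-edge-connected finite graph that is not a cycle has a 2-partition
`(V₁, V₂)` such that `G[V₁]` is connected and `G[V₂]` is 2-edge-connected. -/
theorem two_edge_connected_partition {V : Type*} [Fintype V] (G : SimpleGraph V)
    (h2ec : TwoEdgeConnected G) (hnotcycle : ¬ IsCycleGraph G) :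
    ∃ V1 V2 : Set V, V1.Nonempty ∧ V2.Nonempty ∧ Disjoint V1 V2 ∧ V1 ∪ V2 = Set.univ ∧
      (G.induce V1).Connected ∧ TwoEdgeConnected (G.induce V2) := by
  classical
  obtain ⟨hcard, hconn, hdel⟩ := h2ec
  -- Part 1: a proper "good" subset exists.
  have hFne : ∃ S : Set V, S ≠ Set.univ ∧ TECAux.Good G S := by
    obtain ⟨u₀, c₀, hc₀⟩ := TECAux.exists_cycle hcard hconn hdel
    set L : Set ℕ := {n | ∃ (a : V) (w : G.Walk a a), w.IsCycle ∧ w.length = n} with hL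
    have hLne : L.Nonempty := ⟨c₀.length, u₀, c₀, hc₀, rfl⟩
    obtain ⟨u, c, hc, hlen⟩ := Nat.sInf_mem hLne
    have hmin : ∀ (a : V) (w : G.Walk a a), w.IsCycle → c.length ≤ w.length := by
      intro a w hw
      rw [hlen]
      exact Nat.sInf_le ⟨a, w, hw, rfl⟩
    set S : Set V := {v | v ∈ c.support} with hS
    have hgood : TECAux.Good G S := by
      refine ⟨?_, c.connected_induce_support, ?_⟩
      · obtain ⟨z, h, q, hq⟩ := Walk.not_nil_iff.mp hc.not_nil
        have hu : u ∈ S := c.start_mem_support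
        have hz : z ∈ S := by
          rw [hS, Set.mem_setOf_eq, hq, Walk.support_cons]
          exact List.mem_cons_of_mem _ q.start_mem_support
        have h1 : 1 < S.ncard := (Set.one_lt_ncard_iff (Set.toFinite S)).mpr
          ⟨u, z, hu, hz, h.ne⟩
        omega
      · intro x y hx hy hadj
        have he : s(x, y) ∈ c.edges := TECAux.chordfree hc hmin hx hy hadj
        have hx' : x ∈ c.support := hx
        have hc' : (c.rotate x hx').IsCycle := hc.rotate hx'
        have he' : s(x, y) ∈ (c.rotate x hx').edges := (Walk.rotate_edges c x hx').mem_iff.mpr he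
        have hxe : x ∈ s(x, y) := Sym2.mem_mk_left x y
        have hconn' := TECAux.cycle_delete_edge_connected hc' he' hxe
        have hsupp : {v | v ∈ (c.rotate x hx').support} = S := by
          ext v
          rw [Set.mem_setOf_eq, ← Walk.mem_verts_toSubgraph, Walk.toSubgraph_rotate,
            Walk.mem_verts_toSubgraph]
          rfl
        rwa [hsupp] at hconn'
    by_cases hSu : S = Set.univ
    · exfalso
      apply hnotcycle
      refine ⟨hconn, ?_⟩
      intro v
      have hv : v ∈ c.support := by
        have : v ∈ S := by rw [hSu]; trivial
        exact this
      have hc' : (c.rotate v hv).IsCycle := hc.rotate hv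
      obtain ⟨p₁, p₂, hp, hiff⟩ := TECAux.cycle_neighbors hc'
      have hns : G.neighborSet v = {p₁, p₂} := by
        ext w
        rw [mem_neighborSet, Set.mem_insert_iff, Set.mem_singleton_iff, ← hiff w]
        constructor
        · intro hadj
          have hw : w ∈ c.support := by
            have : w ∈ S := by rw [hSu]; trivial
            exact this
          exact (Walk.rotate_edges c v hv).mem_iff.mpr
            (TECAux.chordfree hc hmin hv hw hadj)
        · intro hmem
          exact Walk.adj_of_mem_edges _ hmem
      rw [hns]
      exact Set.ncard_pair hp
    · exact ⟨S, hSu, hgood⟩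
  -- Part 2: take a maximal good proper subset.
  set F : Set (Set V) := {S | S ≠ Set.univ ∧ TECAux.Good G S} with hF
  obtain ⟨S, hSF, hSmax⟩ := Set.Finite.exists_maximalFor Set.ncard F (Set.toFinite F) hFne
  obtain ⟨hSu, hn2, hScon, hSdel⟩ := hSF
  obtain ⟨a₀, ha₀⟩ := (Set.ne_univ_iff_exists_notMem S).mp hSu
  set K := G.induce (Sᶜ) with hK
  set C := K.connectedComponentMk ⟨a₀, ha₀⟩ with hC
  set A : Set V := Subtype.val '' (C.supp) with hA
  have hAc : A ⊆ Sᶜ := by rintro _ ⟨⟨v, hv⟩, -, rfl⟩; exact hv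
  have ha₀A : a₀ ∈ A := ⟨⟨a₀, ha₀⟩, rfl, rfl⟩
  have hAedge : ∀ p q, p ∈ A → q ∉ A → q ∉ S → ¬G.Adj p q := by
    rintro p q ⟨⟨p', hp'c⟩, hp', rfl⟩ hqA hqS hadj
    apply hqA
    have hq : q ∈ Sᶜ := hqS
    have hKadj : K.Adj ⟨p', hp'c⟩ ⟨q, hq⟩ := hadj
    refine ⟨⟨q, hq⟩, ?_, rfl⟩
    rw [ConnectedComponent.mem_supp_iff] at hp' ⊢
    rw [← hp']
    exact SimpleGraph.ConnectedComponent.connectedComponentMk_eq_of_adj hKadj.symm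
  have hpatchG : ∀ (G' : SimpleGraph V), G' ≤ G → G'.Connected → (G'.induce S).Connected →
      (G'.induce (S ∪ A)).Connected := by
    intro G' hle hc' hS'
    exact TECAux.patch hc' hS' (fun p q hp hq hqS hadj => hAedge p q hp hq hqS (hle hadj))
  have hGoodUA : TECAux.Good G (S ∪ A) := by
    refine ⟨le_trans hn2 (Set.ncard_le_ncard Set.subset_union_left (Set.toFinite _)),
      hpatchG G le_rfl hconn hScon, ?_⟩
    intro x y hx hy hadj
    have hG'conn : (G.deleteEdges {s(x, y)}).Connected := hdel _ (by rwa [SimpleGraph.mem_edgeSet])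
    refine hpatchG _ (fun a b hab => hab.1) hG'conn ?_
    by_cases hxS : x ∈ S
    · by_cases hyS : y ∈ S
      · exact hSdel x y hxS hyS hadj
      · have hswap : s(x, y) = s(y, x) := Sym2.eq_swap
        rw [hswap, TECAux.deleteEdges_induce_of_not_mem G hyS]
        exact hScon
    · rw [TECAux.deleteEdges_induce_of_not_mem G hxS]
      exact hScon
  have hU : S ∪ A = Set.univ := by
    by_contra hU
    have hmem : (S ∪ A) ∈ F := ⟨hU, hGoodUA⟩
    have hlt : S.ncard < (S ∪ A).ncard := Set.ncard_lt_ncard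
      ((Set.ssubset_iff_of_subset Set.subset_union_left).mpr ⟨a₀, Or.inr ha₀A, ha₀⟩)
      (Set.toFinite _)
    have := hSmax (j := S ∪ A) hmem (le_of_lt hlt)
    omega
  have hAS : A = Sᶜ := by
    refine Set.Subset.antisymm hAc (fun v hv => ?_)
    rcases (hU ▸ Set.mem_univ v : v ∈ S ∪ A) with h | h
    · exact absurd h hv
    · exact h
  refine ⟨Sᶜ, S, ⟨a₀, ha₀⟩, ?_, disjoint_compl_left, Set.compl_union_self S, ?_,
    TECAux.good_twoEdgeConnected ⟨hn2, hScon, hSdel⟩⟩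
  · exact Set.nonempty_of_ncard_ne_zero (by omega)
  · have hsupp : ∀ (w : ↑(Sᶜ)), w ∈ C.supp := by
      intro w
      have hw : (w : V) ∈ A := by rw [hAS]; exact w.2
      obtain ⟨w', hw', hval⟩ := hw
      have : w' = w := Subtype.ext hval
      rwa [← this]
    rw [connected_iff]
    refine ⟨fun v w => ?_, ⟨⟨a₀, ha₀⟩⟩⟩
    have hv := (ConnectedComponent.mem_supp_iff _ _).mp (hsupp v)
    have hw := (ConnectedComponent.mem_supp_iff _ _).mp (hsupp w)
    exact ConnectedComponent.exact (hv.trans hw.symm)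
end
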